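/- arXiv:2102.02095 — 3 statements merged into one kernel-verified Lean document; each statement's English description precedes it below -/
import Mathlib

section
/- Let β > 0, α, δ ∈ ℝ, r > 0, L > 0, and let k be a controller backstepping kernel with parameter r. Suppose w : [0,L]×[0,∞) → ℂ is smooth and satisfies the modified target system i w_t + iβ w_{xxx} + α w_{xx} + iδ w_x + i r w = iβ k_y(x,0) w_x(0,t) on (0,L)×(0,∞), with w(0,t) = w(L,t) = w_x(L,t) = 0 for all t ≥ 0. Set λ := r − (β/2) ∫₀ᴸ |k_y(x,0)|² dx. Then ‖w(·,t)‖₂ ≤ e^{−λ t} ‖w(·,0)‖₂ for all t ≥ 0. -/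
noncomputable section

open MeasureTheory

/-- Partial derivative in the first variable. -/
def pd1 (f : ℝ → ℝ → ℂ) : ℝ → ℝ → ℂ := fun x y => deriv (fun x' => f x' y) x

/-- Partial derivative in the second variable. -/
def pd2 (f : ℝ → ℝ → ℂ) : ℝ → ℝ → ℂ := fun x y => deriv (fun y' => f x y') y

/-- The closed triangle Δ̄ = {(x,y) : 0 ≤ y ≤ x ≤ L}. -/
def Tri (L : ℝ) : Set (ℝ × ℝ) := {p | 0 ≤ p.2 ∧ p.2 ≤ p.1 ∧ p.1 ≤ L}

/-- Controller backstepping kernel with parameter `r`. -/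
def IsCtrlKernel (β α δ r L : ℝ) (k : ℝ → ℝ → ℂ) : Prop :=
  (∃ U : Set (ℝ × ℝ), IsOpen U ∧ Tri L ⊆ U ∧ ContDiffOn ℝ 3 (Function.uncurry k) U) ∧
  (∀ p ∈ Tri L,
    (β : ℂ) * (pd1 (pd1 (pd1 k)) p.1 p.2 + pd2 (pd2 (pd2 k)) p.1 p.2)
      - Complex.I * (α : ℂ) * (pd1 (pd1 k) p.1 p.2 - pd2 (pd2 k) p.1 p.2)
      + (δ : ℂ) * (pd1 k p.1 p.2 + pd2 k p.1 p.2) + (r : ℂ) * k p.1 p.2 = 0) ∧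
  (∀ x ∈ Set.Icc (0 : ℝ) L,
    k x x = 0 ∧ k x 0 = 0 ∧ pd1 k x x = ((r * x / (3 * β) : ℝ) : ℂ))

/-- The L²(0,L) norm. -/
def L2norm (L : ℝ) (φ : ℝ → ℂ) : ℝ :=
  Real.sqrt (∫ x in (0:ℝ)..L, ‖φ x‖ ^ 2)

open Set Function

lemma hasDerivAt_pd1 {f : ℝ → ℝ → ℂ} (hf : ContDiff ℝ (⊤ : ℕ∞) (uncurry f)) (x t : ℝ) :
    HasDerivAt (fun x' => f x' t) (pd1 f x t) x := by
  have h : DifferentiableAt ℝ (fun x' : ℝ => uncurry f (x', t)) x :=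
    by have := ((hf.differentiable (by simp)) (x, t)).comp x
        ((differentiableAt_id : DifferentiableAt ℝ id x).prodMk (differentiableAt_const t)); exact this
  exact h.hasDerivAt

lemma hasDerivAt_pd2 {f : ℝ → ℝ → ℂ} (hf : ContDiff ℝ (⊤ : ℕ∞) (uncurry f)) (x t : ℝ) :
    HasDerivAt (fun t' => f x t') (pd2 f x t) t := by
  have h : DifferentiableAt ℝ (fun t' : ℝ => uncurry f (x, t')) t :=
    by have := ((hf.differentiable (by simp)) (x, t)).comp t
        ((differentiableAt_const x).prodMk differentiableAt_id); exact this
  exact h.hasDerivAt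

lemma contDiff_pd1 {f : ℝ → ℝ → ℂ} (hf : ContDiff ℝ (⊤ : ℕ∞) (uncurry f)) :
    ContDiff ℝ (⊤ : ℕ∞) (uncurry (pd1 f)) := by
  have h : uncurry (pd1 f) = fun p : ℝ × ℝ => fderiv ℝ (uncurry f) p (1, 0) := by
    funext p
    have h2 : HasDerivAt (fun x' : ℝ => ((x', p.2) : ℝ × ℝ)) (1, 0) p.1 :=
      (hasDerivAt_id p.1).prodMk (hasDerivAt_const p.1 p.2)
    have h1 : HasDerivAt (fun x' => f x' p.2) (fderiv ℝ (uncurry f) p (1, 0)) p.1 :=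
      by have := (((hf.differentiable (by simp)) p).hasFDerivAt).comp_hasDerivAt p.1 h2; exact this
    exact h1.deriv
  rw [h]
  exact (hf.fderiv_right (by simp)).clm_apply contDiff_const

lemma contDiff_pd2 {f : ℝ → ℝ → ℂ} (hf : ContDiff ℝ (⊤ : ℕ∞) (uncurry f)) :
    ContDiff ℝ (⊤ : ℕ∞) (uncurry (pd2 f)) := by
  have h : uncurry (pd2 f) = fun p : ℝ × ℝ => fderiv ℝ (uncurry f) p (0, 1) := by
    funext p
    have h2 : HasDerivAt (fun t' : ℝ => ((p.1, t') : ℝ × ℝ)) (0, 1) p.2 :=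
      (hasDerivAt_const p.2 p.1).prodMk (hasDerivAt_id p.2)
    have h1 : HasDerivAt (fun t' => f p.1 t') (fderiv ℝ (uncurry f) p (0, 1)) p.2 :=
      by have := (((hf.differentiable (by simp)) p).hasFDerivAt).comp_hasDerivAt p.2 h2; exact this
    exact h1.deriv
  rw [h]
  exact (hf.fderiv_right (by simp)).clm_apply contDiff_const

lemma cont_slice1 {f : ℝ → ℝ → ℂ} (hf : ContDiff ℝ (⊤ : ℕ∞) (uncurry f)) (t : ℝ) :
    Continuous (fun x => f x t) :=
  hf.continuous.comp (continuous_id.prodMk continuous_const)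

lemma hasDerivAt_norm_sq {c : ℝ → ℂ} {c' : ℂ} {τ : ℝ} (hc : HasDerivAt c c' τ) :
    HasDerivAt (fun s => ‖c s‖ ^ 2) (2 * ((starRingEnd ℂ) (c τ) * c').re) τ := by
  have hre : HasDerivAt (fun s => (c s).re) c'.re τ :=
    (Complex.reCLM.hasFDerivAt).comp_hasDerivAt τ hc
  have him : HasDerivAt (fun s => (c s).im) c'.im τ :=
    (Complex.imCLM.hasFDerivAt).comp_hasDerivAt τ hc
  have h1 : HasDerivAt (fun s => (c s).re ^ 2 + (c s).im ^ 2) _ τ := (hre.pow 2).add (him.pow 2)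
  have hfun : (fun s => (c s).re ^ 2 + (c s).im ^ 2) = fun s => ‖c s‖ ^ 2 := by
    funext s
    rw [Complex.sq_norm, Complex.normSq_apply]
    ring
  rw [hfun] at h1
  convert h1 using 1
  simp [Complex.mul_re, Complex.conj_re, Complex.conj_im]
  ring

lemma g_cont {L : ℝ} {k : ℝ → ℝ → ℂ} {U : Set (ℝ × ℝ)} (hU : IsOpen U)
    (hsub : ∀ x ∈ Icc (0:ℝ) L, ((x, (0:ℝ)) : ℝ × ℝ) ∈ U)
    (hkC : ContDiffOn ℝ 3 (uncurry k) U) :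
    ContinuousOn (fun x => pd2 k x 0) (Icc 0 L) := by
  have hd : ∀ x ∈ Icc (0:ℝ) L, pd2 k x 0 = fderiv ℝ (uncurry k) (x, 0) (0, 1) := by
    intro x hx
    have hdiff : DifferentiableAt ℝ (uncurry k) (x, 0) :=
      (hkC.differentiableOn (by norm_num)).differentiableAt (hU.mem_nhds (hsub x hx))
    have h2 : HasDerivAt (fun t' : ℝ => ((x, t') : ℝ × ℝ)) (0, 1) 0 :=
      (hasDerivAt_const 0 x).prodMk (hasDerivAt_id 0)
    have h1 : HasDerivAt (fun y => k x y) (fderiv ℝ (uncurry k) (x, 0) (0, 1)) 0 :=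
      hdiff.hasFDerivAt.comp_hasDerivAt 0 h2
    exact h1.deriv
  have hC : ContinuousOn (fderiv ℝ (uncurry k)) U :=
    hkC.continuousOn_fderiv_of_isOpen hU (by norm_num)
  have h3 : ContinuousOn (fun x : ℝ => fderiv ℝ (uncurry k) (x, 0)) (Icc 0 L) :=
    hC.comp ((continuous_id.prodMk continuous_const).continuousOn) (fun x hx => hsub x hx)
  exact (h3.clm_apply continuousOn_const).congr hd

-- Cauchy-Schwarz-type bound
lemma cs_bound {L : ℝ} (hL : 0 < L) (φ ψ : ℝ → ℂ)
    (hφ : ContinuousOn φ (Icc 0 L)) (hψ : ContinuousOn ψ (Icc 0 L)) :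
    ‖∫ x in (0:ℝ)..L, φ x * ψ x‖ ^ 2 ≤
      (∫ x in (0:ℝ)..L, ‖ψ x‖ ^ 2) * (∫ x in (0:ℝ)..L, ‖φ x‖ ^ 2) := by
  have hIcc : uIcc (0:ℝ) L = Icc 0 L := uIcc_of_le hL.le
  have iφψ : IntervalIntegrable (fun x => φ x * ψ x) volume 0 L :=
    ((hφ.mul hψ).mono hIcc.le).intervalIntegrable
  set P := ∫ x in (0:ℝ)..L, ‖φ x‖ * ‖ψ x‖ with hP
  set E := ∫ x in (0:ℝ)..L, ‖φ x‖ ^ 2 with hE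
  set G := ∫ x in (0:ℝ)..L, ‖ψ x‖ ^ 2 with hG
  have iP : IntervalIntegrable (fun x => ‖φ x‖ * ‖ψ x‖) volume 0 L :=
    ((hφ.norm.mul hψ.norm).mono hIcc.le).intervalIntegrable
  have iE : IntervalIntegrable (fun x => ‖φ x‖ ^ 2) volume 0 L :=
    (((hφ.norm).pow 2).mono hIcc.le).intervalIntegrable
  have iG : IntervalIntegrable (fun x => ‖ψ x‖ ^ 2) volume 0 L :=
    (((hψ.norm).pow 2).mono hIcc.le).intervalIntegrable
  have hP0 : 0 ≤ P := intervalIntegral.integral_nonneg hL.le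
    (fun x _ => mul_nonneg (norm_nonneg _) (norm_nonneg _))
  have hE0 : 0 ≤ E := intervalIntegral.integral_nonneg hL.le (fun x _ => sq_nonneg _)
  have hG0 : 0 ≤ G := intervalIntegral.integral_nonneg hL.le (fun x _ => sq_nonneg _)
  have hQP : ‖∫ x in (0:ℝ)..L, φ x * ψ x‖ ≤ P := by
    refine le_trans (intervalIntegral.norm_integral_le_integral_norm hL.le) (le_of_eq ?_)
    rw [hP]
    congr 1
    funext x
    rw [norm_mul]
  have hkey : ∀ c : ℝ, 0 ≤ c ^ 2 * G - 2 * c * P + E := by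
    intro c
    have h0 : 0 ≤ ∫ x in (0:ℝ)..L, (c * ‖ψ x‖ - ‖φ x‖) ^ 2 :=
      intervalIntegral.integral_nonneg hL.le (fun x _ => sq_nonneg _)
    have hexp : ∫ x in (0:ℝ)..L, (c * ‖ψ x‖ - ‖φ x‖) ^ 2
        = c ^ 2 * G - 2 * c * P + E := by
      have hfun : (fun x => (c * ‖ψ x‖ - ‖φ x‖) ^ 2)
          = fun x => (c ^ 2) * ‖ψ x‖ ^ 2 + (-(2 * c)) * (‖φ x‖ * ‖ψ x‖) + ‖φ x‖ ^ 2 := by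
        funext x; ring
      rw [hfun, intervalIntegral.integral_add (((iG.const_mul _).add (iP.const_mul _))) iE,
        intervalIntegral.integral_add (iG.const_mul _) (iP.const_mul _),
        intervalIntegral.integral_const_mul, intervalIntegral.integral_const_mul]
      rw [← hP, ← hE, ← hG]; ring
    rw [hexp] at h0; exact h0
  have hPsq : P ^ 2 ≤ G * E := by
    rcases eq_or_lt_of_le hG0 with h | h
    · have hPle : P ≤ 0 := by
        by_contra hc
        push_neg at hc
        have h1 := hkey ((E + 1) / (2 * P))
        rw [← h] at h1
        have h2 : 2 * ((E + 1) / (2 * P)) * P = E + 1 := by field_simp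
        nlinarith
      have hPz : P = 0 := le_antisymm hPle hP0
      rw [hPz, ← h]; nlinarith
    · have h3 := hkey (P / G)
      have hg' : G ≠ 0 := ne_of_gt h
      have e : (P / G) ^ 2 * G - 2 * (P / G) * P + E = -(P ^ 2 / G) + E := by
        field_simp; ring
      rw [e] at h3
      have h4 : P ^ 2 / G ≤ E := by linarith
      calc P ^ 2 = (P ^ 2 / G) * G := by field_simp
        _ ≤ E * G := mul_le_mul_of_nonneg_right h4 hG0
        _ = G * E := mul_comm _ _
  nlinarith [hQP, norm_nonneg (∫ x in (0:ℝ)..L, φ x * ψ x)]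

lemma Dbound (β r L α δ : ℝ) (hβ : 0 < β) (hL : 0 < L)
    (w : ℝ → ℝ → ℂ) (hw : ContDiff ℝ (⊤ : ℕ∞) (uncurry w))
    (g : ℝ → ℂ) (hg : ContinuousOn g (Icc 0 L))
    (t : ℝ)
    (hpde' : ∀ x ∈ Ioo (0:ℝ) L, pd2 w x t
      = -(β:ℂ) * pd1 (pd1 (pd1 w)) x t + Complex.I * (α:ℂ) * pd1 (pd1 w) x t
        - (δ:ℂ) * pd1 w x t - (r:ℂ) * w x t + (β:ℂ) * g x * pd1 w 0 t)
    (hb0 : w 0 t = 0) (hbL : w L t = 0) (hbL1 : pd1 w L t = 0) :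
    (∫ x in (0:ℝ)..L, 2 * ((starRingEnd ℂ) (w x t) * pd2 w x t).re)
      ≤ -(2 * r - β * ∫ x in (0:ℝ)..L, ‖g x‖ ^ 2) * ∫ x in (0:ℝ)..L, ‖w x t‖ ^ 2 := by
  have hIcc : uIcc (0:ℝ) L = Icc 0 L := uIcc_of_le hL.le
  have hw1 := contDiff_pd1 hw
  have hw2 := contDiff_pd1 hw1
  have hw3 := contDiff_pd1 hw2
  have hwt := contDiff_pd2 hw
  set u : ℝ → ℂ := fun x => (starRingEnd ℂ) (w x t) with hu_def
  have cu : Continuous u := continuous_star.comp (cont_slice1 hw t)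
  have cw := cont_slice1 hw t
  have cw1 := cont_slice1 hw1 t
  have cw2 := cont_slice1 hw2 t
  have cw3 := cont_slice1 hw3 t
  have cwt := cont_slice1 hwt t
  set a : ℂ := pd1 w 0 t with ha_def
  -- integrability of everything we need
  have iuw1 : IntervalIntegrable (fun x => u x * pd1 w x t) volume 0 L :=
    (cu.mul cw1).intervalIntegrable _ _
  have iuw2 : IntervalIntegrable (fun x => u x * pd1 (pd1 w) x t) volume 0 L :=
    (cu.mul cw2).intervalIntegrable _ _
  have iuw3 : IntervalIntegrable (fun x => u x * pd1 (pd1 (pd1 w)) x t) volume 0 L :=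
    (cu.mul cw3).intervalIntegrable _ _
  have iuw : IntervalIntegrable (fun x => u x * w x t) volume 0 L :=
    (cu.mul cw).intervalIntegrable _ _
  have iuwt : IntervalIntegrable (fun x => u x * pd2 w x t) volume 0 L :=
    (cu.mul cwt).intervalIntegrable _ _
  have iug : IntervalIntegrable (fun x => u x * g x) volume 0 L :=
    ((cu.continuousOn.mul hg).mono hIcc.le).intervalIntegrable
  have i11 : IntervalIntegrable (fun x => (starRingEnd ℂ) (pd1 w x t) * pd1 w x t) volume 0 L :=
    ((continuous_star.comp cw1).mul cw1).intervalIntegrable _ _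
  have i12 : IntervalIntegrable (fun x => (starRingEnd ℂ) (pd1 w x t) * pd1 (pd1 w) x t) volume 0 L :=
    ((continuous_star.comp cw1).mul cw2).intervalIntegrable _ _
  -- derivative facts
  have hdu : ∀ x : ℝ, HasDerivAt u ((starRingEnd ℂ) (pd1 w x t)) x := fun x =>
    (hasDerivAt_pd1 hw x t).star
  have hdu1 : ∀ x : ℝ, HasDerivAt (fun x' => pd1 w x' t) (pd1 (pd1 w) x t) x := fun x =>
    hasDerivAt_pd1 hw1 x t
  have hdu2 : ∀ x : ℝ, HasDerivAt (fun x' => pd1 (pd1 w) x' t) (pd1 (pd1 (pd1 w)) x t) x :=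
    fun x => hasDerivAt_pd1 hw2 x t
  -- IBP identity for J2
  have hI2 : ∫ x in (0:ℝ)..L, u x * pd1 (pd1 w) x t
      = -∫ x in (0:ℝ)..L, (starRingEnd ℂ) (pd1 w x t) * pd1 w x t := by
    have h := intervalIntegral.integral_mul_deriv_eq_deriv_mul_of_hasDerivAt
      (a := (0:ℝ)) (b := L) (u := u) (v := fun x => pd1 w x t)
      (u' := fun x => (starRingEnd ℂ) (pd1 w x t)) (v' := fun x => pd1 (pd1 w) x t)
      cu.continuousOn cw1.continuousOn (fun x _ => hdu x) (fun x _ => hdu1 x)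
      (((continuous_star.comp cw1)).intervalIntegrable _ _) (cw2.intervalIntegrable _ _)
    rw [h]
    simp [hu_def, hbL, hb0, hbL1]
  -- IBP identity for J3
  have hI3 : ∫ x in (0:ℝ)..L, u x * pd1 (pd1 (pd1 w)) x t
      = -∫ x in (0:ℝ)..L, (starRingEnd ℂ) (pd1 w x t) * pd1 (pd1 w) x t := by
    have h := intervalIntegral.integral_mul_deriv_eq_deriv_mul_of_hasDerivAt
      (a := (0:ℝ)) (b := L) (u := u) (v := fun x => pd1 (pd1 w) x t)
      (u' := fun x => (starRingEnd ℂ) (pd1 w x t)) (v' := fun x => pd1 (pd1 (pd1 w)) x t)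
      cu.continuousOn cw2.continuousOn (fun x _ => hdu x) (fun x _ => hdu2 x)
      (((continuous_star.comp cw1)).intervalIntegrable _ _) (cw3.intervalIntegrable _ _)
    rw [h]
    simp [hu_def, hbL, hb0]
  -- FTC identities
  have hFTC1 : ∫ x in (0:ℝ)..L, 2 * ((starRingEnd ℂ) (w x t) * pd1 w x t).re = 0 := by
    have h := intervalIntegral.integral_eq_sub_of_hasDerivAt
      (a := (0:ℝ)) (b := L) (f := fun x => ‖w x t‖ ^ 2)
      (f' := fun x => 2 * ((starRingEnd ℂ) (w x t) * pd1 w x t).re)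
      (fun x _ => hasDerivAt_norm_sq (hasDerivAt_pd1 hw x t))
      ((continuous_const.mul (Complex.continuous_re.comp
        ((continuous_star.comp cw).mul cw1))).intervalIntegrable _ _)
    rw [h]; simp [hbL, hb0]
  have hFTC2 : ∫ x in (0:ℝ)..L, 2 * ((starRingEnd ℂ) (pd1 w x t) * pd1 (pd1 w) x t).re
      = -‖a‖ ^ 2 := by
    have h := intervalIntegral.integral_eq_sub_of_hasDerivAt
      (a := (0:ℝ)) (b := L) (f := fun x => ‖pd1 w x t‖ ^ 2)
      (f' := fun x => 2 * ((starRingEnd ℂ) (pd1 w x t) * pd1 (pd1 w) x t).re)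
      (fun x _ => hasDerivAt_norm_sq (hasDerivAt_pd1 hw1 x t))
      ((continuous_const.mul (Complex.continuous_re.comp
        ((continuous_star.comp cw1).mul cw2))).intervalIntegrable _ _)
    rw [h]; simp [hbL1, ← ha_def]
  -- real part commutes with the integral
  have hre : ∀ (f : ℝ → ℂ), IntervalIntegrable f volume 0 L →
      ∫ x in (0:ℝ)..L, (f x).re = (∫ x in (0:ℝ)..L, f x).re := by
    intro f hf
    exact Complex.reCLM.intervalIntegral_comp_comm hf
  -- split the main integral using the PDE
  have hsplit : ∫ x in (0:ℝ)..L, u x * pd2 w x t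
      = (-(β:ℂ)) * (∫ x in (0:ℝ)..L, u x * pd1 (pd1 (pd1 w)) x t)
        + (Complex.I * (α:ℂ)) * (∫ x in (0:ℝ)..L, u x * pd1 (pd1 w) x t)
        + (-(δ:ℂ)) * (∫ x in (0:ℝ)..L, u x * pd1 w x t)
        + (-(r:ℂ)) * (∫ x in (0:ℝ)..L, u x * w x t)
        + ((β:ℂ) * a) * (∫ x in (0:ℝ)..L, u x * g x) := by
    have hae : ∀ᵐ x : ℝ ∂volume, x ≠ L := by
      rw [MeasureTheory.ae_iff]
      have : {x : ℝ | ¬x ≠ L} = {L} := by ext y; simp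
      rw [this]
      exact Real.volume_singleton
    have e1 : ∫ x in (0:ℝ)..L, u x * pd2 w x t
        = ∫ x in (0:ℝ)..L, ((-(β:ℂ)) * (u x * pd1 (pd1 (pd1 w)) x t)
          + (Complex.I * (α:ℂ)) * (u x * pd1 (pd1 w) x t)
          + (-(δ:ℂ)) * (u x * pd1 w x t)
          + (-(r:ℂ)) * (u x * w x t)
          + ((β:ℂ) * a) * (u x * g x)) := by
      apply intervalIntegral.integral_congr_ae
      filter_upwards [hae] with x hx hxI
      rw [Set.uIoc_of_le hL.le] at hxI
      have hxo : x ∈ Ioo (0:ℝ) L := ⟨hxI.1, lt_of_le_of_ne hxI.2 hx⟩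
      rw [hpde' x hxo]
      ring
    rw [e1,
      intervalIntegral.integral_add
        ((((iuw3.const_mul _).add (iuw2.const_mul _)).add (iuw1.const_mul _)).add
          (iuw.const_mul _)) (iug.const_mul _),
      intervalIntegral.integral_add
        (((iuw3.const_mul _).add (iuw2.const_mul _)).add (iuw1.const_mul _))
        (iuw.const_mul _),
      intervalIntegral.integral_add ((iuw3.const_mul _).add (iuw2.const_mul _))
        (iuw1.const_mul _),
      intervalIntegral.integral_add (iuw3.const_mul _) (iuw2.const_mul _),
      intervalIntegral.integral_const_mul, intervalIntegral.integral_const_mul,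
      intervalIntegral.integral_const_mul, intervalIntegral.integral_const_mul,
      intervalIntegral.integral_const_mul]
  -- the J0 integral is real
  have hJ0 : ∫ x in (0:ℝ)..L, u x * w x t = ((∫ x in (0:ℝ)..L, ‖w x t‖ ^ 2 : ℝ) : ℂ) := by
    rw [← intervalIntegral.integral_ofReal]
    apply intervalIntegral.integral_congr
    intro x _
    rw [hu_def]
    simp only [mul_comm, Complex.mul_conj]
    norm_cast
    rw [Complex.normSq_eq_norm_sq]
  -- similarly for the w1 self-pairing
  have hJ2' : ∫ x in (0:ℝ)..L, (starRingEnd ℂ) (pd1 w x t) * pd1 w x t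
      = ((∫ x in (0:ℝ)..L, ‖pd1 w x t‖ ^ 2 : ℝ) : ℂ) := by
    rw [← intervalIntegral.integral_ofReal]
    apply intervalIntegral.integral_congr
    intro x _
    simp only [mul_comm, Complex.mul_conj]
    norm_cast
    rw [Complex.normSq_eq_norm_sq]
  -- compute D
  set Q : ℂ := ∫ x in (0:ℝ)..L, u x * g x with hQ_def
  set Et : ℝ := ∫ x in (0:ℝ)..L, ‖w x t‖ ^ 2 with hEt_def
  set Gg : ℝ := ∫ x in (0:ℝ)..L, ‖g x‖ ^ 2 with hGg_def
  have hJ1re : (∫ x in (0:ℝ)..L, u x * pd1 w x t).re = 0 := by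
    have h1 : ∫ x in (0:ℝ)..L, (u x * pd1 w x t).re
        = (∫ x in (0:ℝ)..L, u x * pd1 w x t).re := hre _ iuw1
    have h2 : (2:ℝ) * ∫ x in (0:ℝ)..L, (u x * pd1 w x t).re = 0 := by
      rw [← intervalIntegral.integral_const_mul]
      exact hFTC1
    linarith [h1 ▸ h2]
  have hJ3re : (2:ℝ) * (∫ x in (0:ℝ)..L, (starRingEnd ℂ) (pd1 w x t) * pd1 (pd1 w) x t).re
      = -‖a‖ ^ 2 := by
    have h1 : ∫ x in (0:ℝ)..L, ((starRingEnd ℂ) (pd1 w x t) * pd1 (pd1 w) x t).re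
        = (∫ x in (0:ℝ)..L, (starRingEnd ℂ) (pd1 w x t) * pd1 (pd1 w) x t).re := hre _ i12
    have h2 : (2:ℝ) * ∫ x in (0:ℝ)..L, ((starRingEnd ℂ) (pd1 w x t) * pd1 (pd1 w) x t).re
        = -‖a‖ ^ 2 := by
      rw [← intervalIntegral.integral_const_mul]
      exact hFTC2
    rw [← h1]
    exact h2
  have hD : (∫ x in (0:ℝ)..L, 2 * ((starRingEnd ℂ) (w x t) * pd2 w x t).re)
      = -β * ‖a‖ ^ 2 - 2 * r * Et + 2 * β * (a * Q).re := by
    have h1 : (∫ x in (0:ℝ)..L, 2 * ((starRingEnd ℂ) (w x t) * pd2 w x t).re)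
        = 2 * (∫ x in (0:ℝ)..L, u x * pd2 w x t).re := by
      rw [← hre _ iuwt, ← intervalIntegral.integral_const_mul]
    rw [h1, hsplit, hI3, hI2, hJ0, hJ2']
    simp only [Complex.add_re, Complex.mul_re, Complex.neg_re, Complex.neg_im,
      Complex.ofReal_re, Complex.ofReal_im, Complex.I_re, Complex.I_im,
      Complex.mul_im]
    have e3 : β * ((2:ℝ) * (∫ x in (0:ℝ)..L, (starRingEnd ℂ) (pd1 w x t) * pd1 (pd1 w) x t).re)
        = β * (-‖a‖ ^ 2) := by rw [hJ3re]
    have e4 : δ * (∫ x in (0:ℝ)..L, u x * pd1 w x t).re = δ * 0 := by rw [hJ1re]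
    ring_nf
    ring_nf at e3 e4
    linarith [e3, e4]
  -- bounds
  have hE0 : 0 ≤ Et := intervalIntegral.integral_nonneg hL.le (fun x _ => sq_nonneg _)
  have hG0 : 0 ≤ Gg := intervalIntegral.integral_nonneg hL.le (fun x _ => sq_nonneg _)
  have hQ2 : ‖Q‖ ^ 2 ≤ Gg * Et := by
    have h := cs_bound hL u g (cu.continuousOn) hg
    have hnu : (∫ x in (0:ℝ)..L, ‖u x‖ ^ 2) = Et := by
      rw [hEt_def]
      apply intervalIntegral.integral_congr
      intro x _
      rw [hu_def]
      simp
    rw [hnu] at h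
    exact h
  have hYoung : 2 * (a * Q).re ≤ ‖Q‖ ^ 2 + ‖a‖ ^ 2 := by
    have h1 : ‖Q‖ ^ 2 = Q.re ^ 2 + Q.im ^ 2 := by
      rw [Complex.sq_norm, Complex.normSq_apply]; ring
    have h2 : ‖a‖ ^ 2 = a.re ^ 2 + a.im ^ 2 := by
      rw [Complex.sq_norm, Complex.normSq_apply]; ring
    rw [h1, h2, Complex.mul_re]
    nlinarith [sq_nonneg (Q.re - a.re), sq_nonneg (Q.im + a.im)]
  rw [hD]
  nlinarith [hQ2, hYoung, hβ, hE0, hG0]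

theorem stmt1 (β α δ r L : ℝ) (hβ : 0 < β) (hr : 0 < r) (hL : 0 < L)
    (k : ℝ → ℝ → ℂ) (hk : IsCtrlKernel β α δ r L k)
    (w : ℝ → ℝ → ℂ) (hw : ContDiff ℝ (⊤ : ℕ∞) (Function.uncurry w))
    (hpde : ∀ x ∈ Set.Ioo (0:ℝ) L, ∀ t : ℝ, 0 < t →
      Complex.I * pd2 w x t + Complex.I * (β : ℂ) * pd1 (pd1 (pd1 w)) x t
        + (α : ℂ) * pd1 (pd1 w) x t + Complex.I * (δ : ℂ) * pd1 w x t
        + Complex.I * (r : ℂ) * w x t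
        = Complex.I * (β : ℂ) * pd2 k x 0 * pd1 w 0 t)
    (hbc : ∀ t : ℝ, 0 ≤ t → w 0 t = 0 ∧ w L t = 0 ∧ pd1 w L t = 0) :
    ∀ t : ℝ, 0 ≤ t →
      L2norm L (fun x => w x t) ≤
        Real.exp (-(r - β / 2 * ∫ x in (0:ℝ)..L, ‖pd2 k x 0‖ ^ 2) * t)
          * L2norm L (fun x => w x 0) := by
  obtain ⟨⟨U, hU, hUsub, hkC⟩, -, -⟩ := hk
  set g : ℝ → ℂ := fun x => pd2 k x 0 with hg_def
  have hg : ContinuousOn g (Icc 0 L) :=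
    g_cont hU (fun x hx => hUsub ⟨le_refl 0, hx.1, hx.2⟩) hkC
  set G : ℝ := ∫ x in (0:ℝ)..L, ‖g x‖ ^ 2 with hG_def
  set E : ℝ → ℝ := fun s => ∫ x in (0:ℝ)..L, ‖w x s‖ ^ 2 with hE_def
  set D : ℝ → ℝ := fun s => ∫ x in (0:ℝ)..L, 2 * ((starRingEnd ℂ) (w x s) * pd2 w x s).re
    with hD_def
  have hwt := contDiff_pd2 hw
  -- E is differentiable with derivative D
  have hE : ∀ t0 : ℝ, HasDerivAt E (D t0) t0 := by
    intro t0
    have hφ : Continuous (fun p : ℝ × ℝ => 2 * (((starRingEnd ℂ) (w p.1 p.2)) * pd2 w p.1 p.2).re) := by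
      exact continuous_const.mul (Complex.continuous_re.comp
        ((continuous_star.comp hw.continuous).mul hwt.continuous))
    obtain ⟨C, hC⟩ := ((isCompact_Icc (a := (0:ℝ)) (b := L)).prod
      (isCompact_Icc (a := t0 - 1) (b := t0 + 1))).exists_bound_of_continuousOn
      hφ.continuousOn
    have main := intervalIntegral.hasDerivAt_integral_of_dominated_loc_of_deriv_le
      (F := fun s x => ‖w x s‖ ^ 2)
      (F' := fun s x => 2 * (((starRingEnd ℂ) (w x s)) * pd2 w x s).re)
      (x₀ := t0) (a := (0:ℝ)) (b := L) (μ := volume) (bound := fun _ => C)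
      (s := Metric.ball t0 1) (Metric.ball_mem_nhds t0 zero_lt_one)
      (Filter.Eventually.of_forall fun s =>
        (((cont_slice1 hw s).norm.pow 2).aestronglyMeasurable))
      (((cont_slice1 hw t0).norm.pow 2).intervalIntegrable _ _)
      ((continuous_const.mul (Complex.continuous_re.comp
        ((continuous_star.comp (cont_slice1 hw t0)).mul
          (cont_slice1 hwt t0)))).aestronglyMeasurable)
      (Filter.Eventually.of_forall (fun x => fun hx s hs => by
        have hx' : x ∈ Icc (0:ℝ) L := by
          rw [Set.uIoc_of_le hL.le] at hx
          exact Set.Ioc_subset_Icc_self hx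
        have hs' : s ∈ Icc (t0 - 1) (t0 + 1) := by
          rw [Real.ball_eq_Ioo] at hs
          exact Set.Ioo_subset_Icc_self hs
        exact hC (x, s) ⟨hx', hs'⟩))
      intervalIntegrable_const
      (Filter.Eventually.of_forall (fun x => fun _ s _ =>
        hasDerivAt_norm_sq (hasDerivAt_pd2 hw x s)))
    exact main.2
  -- the decay rate
  set lam2 : ℝ := 2 * r - β * G with hlam2_def
  -- derivative bound for positive times
  have hDle : ∀ t : ℝ, 0 < t → D t ≤ -lam2 * E t := by
    intro t ht
    obtain ⟨hb0, hbL, hbL1⟩ := hbc t ht.le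
    have hpde' : ∀ x ∈ Ioo (0:ℝ) L, pd2 w x t
        = -(β:ℂ) * pd1 (pd1 (pd1 w)) x t + Complex.I * (α:ℂ) * pd1 (pd1 w) x t
          - (δ:ℂ) * pd1 w x t - (r:ℂ) * w x t + (β:ℂ) * g x * pd1 w 0 t := by
      intro x hx
      have h := hpde x hx t ht
      linear_combination (-Complex.I) * h
        + (pd2 w x t + (β:ℂ) * pd1 (pd1 (pd1 w)) x t + (δ:ℂ) * pd1 w x t + (r:ℂ) * w x t
            - (β:ℂ) * g x * pd1 w 0 t) * Complex.I_mul_I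
    exact Dbound β r L α δ hβ hL w hw g hg t hpde' hb0 hbL hbL1
  -- Gronwall
  set F : ℝ → ℝ := fun s => E s * Real.exp (lam2 * s) with hF_def
  have hF : ∀ t : ℝ, HasDerivAt F
      (D t * Real.exp (lam2 * t) + E t * (Real.exp (lam2 * t) * lam2)) t := by
    intro t
    have hexp : HasDerivAt (fun s => Real.exp (lam2 * s)) (Real.exp (lam2 * t) * lam2) t := by
      simpa using ((hasDerivAt_id t).const_mul lam2).exp
    exact (hE t).mul hexp
  have hFdiff : Differentiable ℝ F := fun t => (hF t).differentiableAt
  have hanti : AntitoneOn F (Ici 0) := by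
    apply antitoneOn_of_deriv_nonpos (convex_Ici 0) hFdiff.continuous.continuousOn
      hFdiff.differentiableOn
    intro t ht
    rw [interior_Ici] at ht
    rw [(hF t).deriv]
    have hb := hDle t ht
    have he := Real.exp_pos (lam2 * t)
    nlinarith [mul_le_mul_of_nonneg_right hb he.le]
  -- conclude
  intro t ht
  have hle : E t * Real.exp (lam2 * t) ≤ E 0 := by
    have h := hanti (self_mem_Ici) ht ht
    simpa [hF_def] using h
  have hEt_bound : E t ≤ Real.exp (-lam2 * t) * E 0 := by
    have hpos := Real.exp_pos (-lam2 * t)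
    have h2 := mul_le_mul_of_nonneg_right hle hpos.le
    have h3 : E t * Real.exp (lam2 * t) * Real.exp (-lam2 * t) = E t := by
      rw [mul_assoc, ← Real.exp_add]
      ring_nf
      simp
    rw [h3] at h2
    linarith [h2]
  have hE0nn : 0 ≤ E 0 := intervalIntegral.integral_nonneg hL.le (fun x _ => sq_nonneg _)
  -- translate to L2norm
  have habs : ∀ s : ℝ, L2norm L (fun x => w x s) = Real.sqrt (E s) := by
    intro s
    unfold L2norm
    congr 1
  have hGabs : (∫ x in (0:ℝ)..L, ‖pd2 k x 0‖ ^ 2) = G := by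
    rw [hG_def]
  rw [habs, habs]
  set lam : ℝ := r - β / 2 * G with hlam_def
  have hlam2 : lam2 = 2 * lam := by rw [hlam_def, hlam2_def]; ring
  have hexpsq : Real.exp (-lam2 * t) = Real.exp (-lam * t) ^ 2 := by
    rw [sq, ← Real.exp_add, hlam2]; ring_nf
  calc Real.sqrt (E t) ≤ Real.sqrt (Real.exp (-lam * t) ^ 2 * E 0) := by
        apply Real.sqrt_le_sqrt
        rw [← hexpsq]
        exact hEt_bound
    _ = Real.exp (-lam * t) * Real.sqrt (E 0) := by
        rw [Real.sqrt_mul (sq_nonneg _), Real.sqrt_sq (Real.exp_pos _).le]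
end
end

section
/- Let β > 0, α, δ ∈ ℝ, r > 0, L > 0, ε > 0, K ≥ 0 and μ ∈ ℝ. Let a, Π₁, Π₂ : [0,L] → ℂ be continuous, and let g₁, g₂ : [0,∞) → ℂ be continuous with |g₁(t)|² + |g₂(t)|² ≤ K² e^{−2μ t} for all t ≥ 0. Suppose ŵ : [0,L]×[0,∞) → ℂ is smooth and satisfies i ŵ_t + iβ ŵ_{xxx} + α ŵ_{xx} + iδ ŵ_x + i r ŵ = iβ a(x) ŵ_x(0,t) + Π₁(x) g₁(t) + Π₂(x) g₂(t) on (0,L)×(0,∞), with ŵ(0,t) = ŵ(L,t) = ŵ_x(L,t) = 0 for all t ≥ 0. Set ν := r − (β/2)‖a‖₂² − εβ(‖Π₁‖₂² + ‖Π₂‖₂²). If ν < μ, then for all t ≥ 0, ‖ŵ(·,t)‖₂² ≤ e^{−2ν t} ( ‖ŵ(·,0)‖₂² + K²/(4εβ(μ−ν)) ). -/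
noncomputable section

open MeasureTheory

section Aux
open Complex Set Metric
open scoped Interval

lemma pd1_hasDerivAt (u : ℝ → ℝ → ℂ) (hu : ContDiff ℝ (⊤ : ℕ∞) (Function.uncurry u)) (x t : ℝ) :
    HasDerivAt (fun x' => u x' t) (fderiv ℝ (Function.uncurry u) (x, t) (1, 0)) x := by
  have h1 : HasDerivAt (fun x' : ℝ => ((x', t) : ℝ × ℝ)) ((1 : ℝ), (0 : ℝ)) x :=
    (hasDerivAt_id x).prodMk (hasDerivAt_const x t)
  have h2 : HasFDerivAt (Function.uncurry u) (fderiv ℝ (Function.uncurry u) (x, t)) (x, t) :=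
    (hu.differentiable (by simp) (x, t)).hasFDerivAt
  exact h2.comp_hasDerivAt x h1

lemma pd2_hasDerivAt (u : ℝ → ℝ → ℂ) (hu : ContDiff ℝ (⊤ : ℕ∞) (Function.uncurry u)) (x t : ℝ) :
    HasDerivAt (fun t' => u x t') (fderiv ℝ (Function.uncurry u) (x, t) (0, 1)) t := by
  have h1 : HasDerivAt (fun t' : ℝ => ((x, t') : ℝ × ℝ)) ((0 : ℝ), (1 : ℝ)) t :=
    (hasDerivAt_const t x).prodMk (hasDerivAt_id t)
  have h2 : HasFDerivAt (Function.uncurry u) (fderiv ℝ (Function.uncurry u) (x, t)) (x, t) :=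
    (hu.differentiable (by simp) (x, t)).hasFDerivAt
  exact h2.comp_hasDerivAt t h1

lemma pd1_eq (u : ℝ → ℝ → ℂ) (hu : ContDiff ℝ (⊤ : ℕ∞) (Function.uncurry u)) (x t : ℝ) :
    pd1 u x t = fderiv ℝ (Function.uncurry u) (x, t) (1, 0) :=
  (pd1_hasDerivAt u hu x t).deriv

lemma pd2_eq (u : ℝ → ℝ → ℂ) (hu : ContDiff ℝ (⊤ : ℕ∞) (Function.uncurry u)) (x t : ℝ) :
    pd2 u x t = fderiv ℝ (Function.uncurry u) (x, t) (0, 1) :=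
  (pd2_hasDerivAt u hu x t).deriv

lemma contDiff_pd1_s6 (u : ℝ → ℝ → ℂ) (hu : ContDiff ℝ (⊤ : ℕ∞) (Function.uncurry u)) :
    ContDiff ℝ (⊤ : ℕ∞) (Function.uncurry (pd1 u)) := by
  have : Function.uncurry (pd1 u) = fun p : ℝ × ℝ =>
      fderiv ℝ (Function.uncurry u) p ((1 : ℝ), (0 : ℝ)) := by
    funext p
    exact pd1_eq u hu p.1 p.2
  rw [this]
  exact (hu.fderiv_right (by simp)).clm_apply contDiff_const

lemma contDiff_pd2_s6 (u : ℝ → ℝ → ℂ) (hu : ContDiff ℝ (⊤ : ℕ∞) (Function.uncurry u)) :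
    ContDiff ℝ (⊤ : ℕ∞) (Function.uncurry (pd2 u)) := by
  have : Function.uncurry (pd2 u) = fun p : ℝ × ℝ =>
      fderiv ℝ (Function.uncurry u) p ((0 : ℝ), (1 : ℝ)) := by
    funext p
    exact pd2_eq u hu p.1 p.2
  rw [this]
  exact (hu.fderiv_right (by simp)).clm_apply contDiff_const

lemma pd1_hasDerivAt' (u : ℝ → ℝ → ℂ) (hu : ContDiff ℝ (⊤ : ℕ∞) (Function.uncurry u)) (x t : ℝ) :
    HasDerivAt (fun x' => u x' t) (pd1 u x t) x := by
  rw [pd1_eq u hu]; exact pd1_hasDerivAt u hu x t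

lemma pd2_hasDerivAt' (u : ℝ → ℝ → ℂ) (hu : ContDiff ℝ (⊤ : ℕ∞) (Function.uncurry u)) (x t : ℝ) :
    HasDerivAt (fun t' => u x t') (pd2 u x t) t := by
  rw [pd2_eq u hu]; exact pd2_hasDerivAt u hu x t


lemma hasDerivAt_conj {f : ℝ → ℂ} {f' : ℂ} {x : ℝ} (hf : HasDerivAt f f' x) :
    HasDerivAt (fun y => (starRingEnd ℂ) (f y)) ((starRingEnd ℂ) f') x := by
  have := (Complex.conjCLE.toContinuousLinearMap.hasFDerivAt
    (x := f x)).comp_hasDerivAt x hf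
  exact this

lemma hasDerivAt_re_comp {f : ℝ → ℂ} {f' : ℂ} {x : ℝ} (hf : HasDerivAt f f' x) :
    HasDerivAt (fun y => (f y).re) f'.re x := by
  have := (Complex.reCLM.hasFDerivAt (x := f x)).comp_hasDerivAt x hf
  exact this

lemma hasDerivAt_im_comp {f : ℝ → ℂ} {f' : ℂ} {x : ℝ} (hf : HasDerivAt f f' x) :
    HasDerivAt (fun y => (f y).im) f'.im x := by
  have := (Complex.imCLM.hasFDerivAt (x := f x)).comp_hasDerivAt x hf
  exact this

lemma hasDerivAt_re_conj_mul {f g : ℝ → ℂ} {f' g' : ℂ} {x : ℝ}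
    (hf : HasDerivAt f f' x) (hg : HasDerivAt g g' x) :
    HasDerivAt (fun y => ((starRingEnd ℂ) (f y) * g y).re)
      ((starRingEnd ℂ) f' * g x + (starRingEnd ℂ) (f x) * g').re x :=
  hasDerivAt_re_comp (((hasDerivAt_conj hf).mul hg))

lemma hasDerivAt_im_conj_mul {f g : ℝ → ℂ} {f' g' : ℂ} {x : ℝ}
    (hf : HasDerivAt f f' x) (hg : HasDerivAt g g' x) :
    HasDerivAt (fun y => ((starRingEnd ℂ) (f y) * g y).im)
      ((starRingEnd ℂ) f' * g x + (starRingEnd ℂ) (f x) * g').im x :=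
  hasDerivAt_im_comp (((hasDerivAt_conj hf).mul hg))

lemma normSq_eq_re (z : ℂ) : Complex.normSq z = ((starRingEnd ℂ) z * z).re := by
  simp [Complex.normSq_apply, Complex.mul_re]

lemma hasDerivAt_normSq_comp {f : ℝ → ℂ} {f' : ℂ} {x : ℝ} (hf : HasDerivAt f f' x) :
    HasDerivAt (fun y => Complex.normSq (f y)) (2 * ((starRingEnd ℂ) (f x) * f').re) x := by
  have h := hasDerivAt_re_conj_mul hf hf
  have : ((starRingEnd ℂ) f' * f x + (starRingEnd ℂ) (f x) * f').re
      = 2 * ((starRingEnd ℂ) (f x) * f').re := by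
    simp [Complex.add_re, Complex.mul_re]; ring
  rw [this] at h
  simpa only [← normSq_eq_re] using h


lemma cs_real {L : ℝ} (hL : 0 ≤ L) {f g : ℝ → ℝ}
    (hf : ContinuousOn f (Icc 0 L)) (hg : ContinuousOn g (Icc 0 L)) :
    (∫ x in (0:ℝ)..L, f x * g x) ^ 2 ≤
      (∫ x in (0:ℝ)..L, f x ^ 2) * (∫ x in (0:ℝ)..L, g x ^ 2) := by
  have hI : Set.uIcc (0:ℝ) L = Icc 0 L := Set.uIcc_of_le hL
  set A := ∫ x in (0:ℝ)..L, f x ^ 2 with hA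
  set B := ∫ x in (0:ℝ)..L, g x ^ 2 with hB
  set C := ∫ x in (0:ℝ)..L, f x * g x with hC
  have hifg : IntervalIntegrable (fun x => f x * g x) volume 0 L :=
    (hI ▸ (hf.mul hg)).intervalIntegrable
  have hif2 : IntervalIntegrable (fun x => f x ^ 2) volume 0 L := by
    have : ContinuousOn (fun x => f x ^ 2) (Set.uIcc 0 L) := hI ▸ (hf.pow 2)
    exact this.intervalIntegrable
  have hig2 : IntervalIntegrable (fun x => g x ^ 2) volume 0 L := by
    have : ContinuousOn (fun x => g x ^ 2) (Set.uIcc 0 L) := hI ▸ (hg.pow 2)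
    exact this.intervalIntegrable
  have key : ∀ l : ℝ, 0 ≤ A - 2 * l * C + l ^ 2 * B := by
    intro l
    have h0 : 0 ≤ ∫ x in (0:ℝ)..L, (f x - l * g x) ^ 2 :=
      intervalIntegral.integral_nonneg hL (fun u _ => sq_nonneg _)
    have hsplit : (∫ x in (0:ℝ)..L, (f x - l * g x) ^ 2)
        = A - 2 * l * C + l ^ 2 * B := by
      have h1 : ∀ x : ℝ, (f x - l * g x) ^ 2
          = f x ^ 2 - (2 * l) * (f x * g x) + l ^ 2 * g x ^ 2 := by intro x; ring
      rw [intervalIntegral.integral_congr (g := fun x =>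
        f x ^ 2 - (2 * l) * (f x * g x) + l ^ 2 * g x ^ 2) (fun x _ => h1 x)]
      rw [intervalIntegral.integral_add (((hif2.sub (hifg.const_mul (2*l))))
        ) ((hig2.const_mul (l^2))),
        intervalIntegral.integral_sub hif2 (hifg.const_mul (2*l)),
        intervalIntegral.integral_const_mul, intervalIntegral.integral_const_mul]
    linarith [hsplit ▸ h0]
  have hBnn : 0 ≤ B := intervalIntegral.integral_nonneg hL (fun u _ => sq_nonneg _)
  have hAnn : 0 ≤ A := intervalIntegral.integral_nonneg hL (fun u _ => sq_nonneg _)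
  rcases eq_or_lt_of_le hBnn with hB0 | hBpos
  · have hC0 : C = 0 := by
      by_contra hC0
      have := key ((A + 1) / (2 * C))
      rw [← hB0] at this
      have h2C : 2 * C ≠ 0 := by simpa using hC0
      have : 0 ≤ A - (A + 1) := by
        have harith : 2 * ((A + 1) / (2 * C)) * C = A + 1 := by
          field_simp
        nlinarith [this]
      linarith
    rw [hC0]
    simpa using mul_nonneg hAnn hBnn
  · have := key (C / B)
    have hB' : B ≠ 0 := ne_of_gt hBpos
    have harith : A - 2 * (C / B) * C + (C / B) ^ 2 * B = A - C ^ 2 / B := by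
      field_simp; ring
    rw [harith, sub_nonneg, div_le_iff₀ hBpos] at this
    linarith [this]


lemma cs_complex {L : ℝ} (hL : 0 ≤ L) {u φ : ℝ → ℂ}
    (hu : ContinuousOn u (Icc 0 L)) (hφ : ContinuousOn φ (Icc 0 L)) :
    ‖∫ x in (0:ℝ)..L, u x * φ x‖ ^ 2 ≤
      (∫ x in (0:ℝ)..L, Complex.normSq (u x)) * (∫ x in (0:ℝ)..L, Complex.normSq (φ x)) := by
  have h1 : ‖∫ x in (0:ℝ)..L, u x * φ x‖ ≤ ∫ x in (0:ℝ)..L, ‖u x * φ x‖ :=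
    intervalIntegral.norm_integral_le_integral_norm hL
  have h2 : (∫ x in (0:ℝ)..L, ‖u x * φ x‖) = ∫ x in (0:ℝ)..L, ‖u x‖ * ‖φ x‖ := by
    refine intervalIntegral.integral_congr fun x _ => ?_
    exact norm_mul _ _
  have h3 : (∫ x in (0:ℝ)..L, ‖u x‖ * ‖φ x‖) ^ 2 ≤
      (∫ x in (0:ℝ)..L, ‖u x‖ ^ 2) * (∫ x in (0:ℝ)..L, ‖φ x‖ ^ 2) :=
    cs_real hL (hu.norm) (hφ.norm)
  have h4 : (∫ x in (0:ℝ)..L, ‖u x‖ ^ 2) = ∫ x in (0:ℝ)..L, Complex.normSq (u x) := by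
    refine intervalIntegral.integral_congr fun x _ => ?_
    rw [Complex.sq_norm]
  have h5 : (∫ x in (0:ℝ)..L, ‖φ x‖ ^ 2) = ∫ x in (0:ℝ)..L, Complex.normSq (φ x) := by
    refine intervalIntegral.integral_congr fun x _ => ?_
    rw [Complex.sq_norm]
  have h6 : ‖∫ x in (0:ℝ)..L, u x * φ x‖ ^ 2
      ≤ (∫ x in (0:ℝ)..L, ‖u x‖ * ‖φ x‖) ^ 2 := by
    have hnn : 0 ≤ ‖∫ x in (0:ℝ)..L, u x * φ x‖ := norm_nonneg _
    exact pow_le_pow_left₀ hnn (h2 ▸ h1) 2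
  calc ‖∫ x in (0:ℝ)..L, u x * φ x‖ ^ 2
      ≤ (∫ x in (0:ℝ)..L, ‖u x‖ * ‖φ x‖) ^ 2 := h6
    _ ≤ _ := h4 ▸ h5 ▸ h3


lemma continuous_slice1 {u : ℝ → ℝ → ℂ} (hu : Continuous (Function.uncurry u)) (t : ℝ) :
    Continuous (fun x => u x t) :=
  hu.comp (continuous_id.prodMk continuous_const)

lemma continuous_slice2 {u : ℝ → ℝ → ℂ} (hu : Continuous (Function.uncurry u)) (x : ℝ) :
    Continuous (fun t => u x t) :=
  hu.comp (continuous_const.prodMk continuous_id)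

lemma E_hasDerivAt (w : ℝ → ℝ → ℂ) (hw : ContDiff ℝ (⊤ : ℕ∞) (Function.uncurry w))
    {L : ℝ} (hL : 0 < L) (t₀ : ℝ) :
    HasDerivAt (fun t => ∫ x in (0:ℝ)..L, Complex.normSq (w x t))
      (∫ x in (0:ℝ)..L, 2 * ((starRingEnd ℂ) (w x t₀) * pd2 w x t₀).re) t₀ := by
  have hwc : Continuous (Function.uncurry w) := hw.continuous
  have hw2c : Continuous (Function.uncurry (pd2 w)) := (contDiff_pd2_s6 w hw).continuous
  -- the uncurried derivative integrand
  set Φ : ℝ × ℝ → ℝ := fun p => 2 * ((starRingEnd ℂ) (w p.1 p.2) * pd2 w p.1 p.2).re with hΦ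
  have hΦc : Continuous Φ := by
    apply Continuous.mul continuous_const
    exact Complex.continuous_re.comp ((Complex.continuous_conj.comp hwc).mul hw2c)
  have hKc : IsCompact ((Icc (0:ℝ) L) ×ˢ (Icc (t₀ - 1) (t₀ + 1))) :=
    isCompact_Icc.prod isCompact_Icc
  obtain ⟨C, hC⟩ := hKc.exists_bound_of_continuousOn hΦc.continuousOn
  have hIoc : Ι (0:ℝ) L = Ioc 0 L := Set.uIoc_of_le hL.le
  have main := intervalIntegral.hasDerivAt_integral_of_dominated_loc_of_deriv_le
    (F := fun t x => Complex.normSq (w x t))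
    (F' := fun t x => 2 * ((starRingEnd ℂ) (w x t) * pd2 w x t).re)
    (x₀ := t₀) (a := (0:ℝ)) (b := L) (μ := volume) (bound := fun _ => C)
    (s := Metric.ball t₀ 1) (Metric.ball_mem_nhds t₀ one_pos)
    ?_ ?_ ?_ ?_ ?_ ?_
  · exact main.2
  · filter_upwards with t
    exact ((Complex.continuous_normSq.comp (continuous_slice1 hwc t))).aestronglyMeasurable
  · exact ((Complex.continuous_normSq.comp (continuous_slice1 hwc t₀))).intervalIntegrable 0 L
  · exact (hΦc.comp (continuous_id.prodMk continuous_const)).aestronglyMeasurable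
  · filter_upwards with x hx t ht
    have hx' : x ∈ Icc (0:ℝ) L := Ioc_subset_Icc_self (hIoc ▸ hx)
    have ht' : t ∈ Icc (t₀ - 1) (t₀ + 1) := by
      have := mem_ball_iff_norm.mp ht
      rw [Real.norm_eq_abs, abs_sub_lt_iff] at this
      constructor <;> linarith [this.1, this.2]
    exact hC (x, t) (Set.mk_mem_prod hx' ht')
  · exact intervalIntegrable_const
  · filter_upwards with x hx t ht
    exact hasDerivAt_normSq_comp (pd2_hasDerivAt' w hw x t)


lemma abs_sub_sub_le (A B C : ℂ) :
    ‖A - B - C‖ ≤ ‖A‖ + ‖B‖ + ‖C‖ := by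
  calc ‖A - B - C‖ ≤ ‖A - B‖ + ‖C‖ := by
        simpa [sub_eq_add_neg] using norm_add_le (A - B) (-C)
    _ ≤ ‖A‖ + ‖B‖ + ‖C‖ := by
        have : ‖A - B‖ ≤ ‖A‖ + ‖B‖ := by
          simpa [sub_eq_add_neg] using norm_add_le A (-B)
        linarith

-- the pure arithmetic estimate
lemma young_div (ε β s γ E N : ℝ) (hβ : 0 < β) (hε : 0 < ε) (hsN : s ^ 2 ≤ E * N) :
    2 * (γ * s) ≤ 2 * ε * β * (E * N) + γ ^ 2 / (2 * ε * β) := by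
  have hεβ : 0 < 2 * ε * β := by positivity
  set Q := γ ^ 2 / (2 * ε * β) with hQdef
  have hQ : γ ^ 2 = 2 * ε * β * Q := by rw [hQdef]; field_simp
  have heq : 2 * ε * β * (2 * ε * β * s ^ 2 - 2 * (γ * s) + Q)
      = (2 * ε * β * s - γ) ^ 2 := by linear_combination -hQ
  have key : 0 ≤ 2 * ε * β * s ^ 2 - 2 * (γ * s) + Q := by
    nlinarith [heq, sq_nonneg (2 * ε * β * s - γ), hεβ]
  have h2 : 2 * ε * β * s ^ 2 ≤ 2 * ε * β * (E * N) :=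
    mul_le_mul_of_nonneg_left hsN hεβ.le
  linarith

lemma estimate_arith (β ε r E Na N1 N2 G0 sa s1 s2 γ1 γ2 ν : ℝ)
    (hβ : 0 < β) (hε : 0 < ε) (hE : 0 ≤ E) (hNa : 0 ≤ Na) (hN1 : 0 ≤ N1) (hN2 : 0 ≤ N2)
    (hG0 : 0 ≤ G0) (hsa : 0 ≤ sa) (hs1 : 0 ≤ s1) (hs2 : 0 ≤ s2) (hγ1 : 0 ≤ γ1) (hγ2 : 0 ≤ γ2)
    (hsa2 : sa ^ 2 ≤ E * Na) (hs12 : s1 ^ 2 ≤ E * N1) (hs22 : s2 ^ 2 ≤ E * N2)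
    (hν : ν = r - β / 2 * Na - ε * β * (N1 + N2)) :
    -β * G0 ^ 2 - 2 * r * E + 2 * (β * G0 * sa + γ1 * s1 + γ2 * s2)
      ≤ -2 * ν * E + (γ1 ^ 2 + γ2 ^ 2) / (2 * ε * β) := by
  have hεβ : 0 < 2 * ε * β := by positivity
  have hY0 : 2 * (β * G0 * sa) ≤ β * G0 ^ 2 + β * (E * Na) := by
    have h1 : 0 ≤ β * (G0 - sa) ^ 2 := mul_nonneg hβ.le (sq_nonneg _)
    have h2 : β * sa ^ 2 ≤ β * (E * Na) := mul_le_mul_of_nonneg_left hsa2 hβ.le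
    nlinarith [h1, h2]
  have hY1 := young_div ε β s1 γ1 E N1 hβ hε hs12
  have hY2 := young_div ε β s2 γ2 E N2 hβ hε hs22
  have hdiv : (γ1 ^ 2 + γ2 ^ 2) / (2 * ε * β)
      = γ1 ^ 2 / (2 * ε * β) + γ2 ^ 2 / (2 * ε * β) := by ring
  calc -β * G0 ^ 2 - 2 * r * E + 2 * (β * G0 * sa + γ1 * s1 + γ2 * s2)
      ≤ -β * G0 ^ 2 - 2 * r * E + ((β * G0 ^ 2 + β * (E * Na))
        + (2 * ε * β * (E * N1) + γ1 ^ 2 / (2 * ε * β))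
        + (2 * ε * β * (E * N2) + γ2 ^ 2 / (2 * ε * β))) := by linarith
    _ = -2 * (r - β / 2 * Na - ε * β * (N1 + N2)) * E
        + (γ1 ^ 2 + γ2 ^ 2) / (2 * ε * β) := by rw [hdiv]; ring
    _ = -2 * ν * E + (γ1 ^ 2 + γ2 ^ 2) / (2 * ε * β) := by rw [hν]


theorem Ederiv_eq (β α δ r L : ℝ) (hβ : 0 < β) (hL : 0 < L)
    (a Pi₁ Pi₂ : ℝ → ℂ)
    (ha : ContinuousOn a (Set.Icc (0:ℝ) L))
    (hPi₁ : ContinuousOn Pi₁ (Set.Icc (0:ℝ) L))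
    (hPi₂ : ContinuousOn Pi₂ (Set.Icc (0:ℝ) L))
    (g₁ g₂ : ℝ → ℂ)
    (w : ℝ → ℝ → ℂ) (hw : ContDiff ℝ (⊤ : ℕ∞) (Function.uncurry w))
    (t : ℝ) (ht : 0 < t)
    (hpde : ∀ x ∈ Set.Ioo (0:ℝ) L,
      Complex.I * pd2 w x t + Complex.I * (β : ℂ) * pd1 (pd1 (pd1 w)) x t
        + (α : ℂ) * pd1 (pd1 w) x t + Complex.I * (δ : ℂ) * pd1 w x t
        + Complex.I * (r : ℂ) * w x t
        = Complex.I * (β : ℂ) * a x * pd1 w 0 t + Pi₁ x * g₁ t + Pi₂ x * g₂ t)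
    (hbc0 : w 0 t = 0) (hbcL : w L t = 0) (hbcL1 : pd1 w L t = 0) :
    (∫ x in (0:ℝ)..L, 2 * ((starRingEnd ℂ) (w x t) * pd2 w x t).re)
      = -β * Complex.normSq (pd1 w 0 t)
        - 2 * r * (∫ x in (0:ℝ)..L, Complex.normSq (w x t))
        + 2 * ((β : ℂ) * pd1 w 0 t * (∫ x in (0:ℝ)..L, (starRingEnd ℂ) (w x t) * a x)
            - Complex.I * g₁ t * (∫ x in (0:ℝ)..L, (starRingEnd ℂ) (w x t) * Pi₁ x)
            - Complex.I * g₂ t * (∫ x in (0:ℝ)..L, (starRingEnd ℂ) (w x t) * Pi₂ x)).re := by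
  have hw1 : ContDiff ℝ (⊤ : ℕ∞) (Function.uncurry (pd1 w)) := contDiff_pd1_s6 w hw
  have hw2 : ContDiff ℝ (⊤ : ℕ∞) (Function.uncurry (pd1 (pd1 w))) := contDiff_pd1_s6 _ hw1
  have hw3 : ContDiff ℝ (⊤ : ℕ∞) (Function.uncurry (pd1 (pd1 (pd1 w)))) := contDiff_pd1_s6 _ hw2
  set g0 : ℂ := pd1 w 0 t with hg0
  set c : ℝ → ℂ := fun x => (β : ℂ) * a x * g0 - Complex.I * (Pi₁ x * g₁ t)
      - Complex.I * (Pi₂ x * g₂ t) with hc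
  set ψ : ℝ → ℝ := fun x => -(2 * r) * Complex.normSq (w x t)
      + 2 * ((starRingEnd ℂ) (w x t) * c x).re with hψ
  set G : ℝ → ℝ := fun x =>
      -β * (2 * ((starRingEnd ℂ) (w x t) * pd1 (pd1 w) x t).re - Complex.normSq (pd1 w x t))
      - α * (2 * ((starRingEnd ℂ) (w x t) * pd1 w x t).im)
      - δ * Complex.normSq (w x t) with hGdef
  set gg : ℝ → ℝ := fun x =>
      -β * (2 * ((starRingEnd ℂ) (w x t) * pd1 (pd1 (pd1 w)) x t).re)
      - α * (2 * ((starRingEnd ℂ) (w x t) * pd1 (pd1 w) x t).im)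
      - δ * (2 * ((starRingEnd ℂ) (w x t) * pd1 w x t).re) with hggdef
  -- derivative of G
  have hG : ∀ x : ℝ, HasDerivAt G (gg x) x := by
    intro x
    have d0 := pd1_hasDerivAt' w hw x t
    have d1 := pd1_hasDerivAt' (pd1 w) hw1 x t
    have d2 := pd1_hasDerivAt' (pd1 (pd1 w)) hw2 x t
    have hA := hasDerivAt_re_conj_mul d0 d2
    have hB := hasDerivAt_normSq_comp d1
    have hC := hasDerivAt_im_conj_mul d0 d1
    have hD := hasDerivAt_normSq_comp d0
    have h := ((((hA.const_mul (2:ℝ)).sub hB).const_mul (-β)).sub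
      ((hC.const_mul (2:ℝ)).const_mul α)).sub (hD.const_mul δ)
    refine h.congr_deriv ?_
    simp only [hggdef, Complex.add_re, Complex.add_im, Complex.mul_re, Complex.mul_im,
      Complex.conj_re, Complex.conj_im, Complex.normSq_apply]
    ring
  -- FTC
  have hggc : Continuous gg := by
    have c0 := continuous_slice1 hw.continuous t
    have c1 := continuous_slice1 hw1.continuous t
    have c2 := continuous_slice1 hw2.continuous t
    have c3 := continuous_slice1 hw3.continuous t
    fun_prop
  have hFTC : (∫ x in (0:ℝ)..L, gg x) = G L - G 0 :=
    intervalIntegral.integral_eq_sub_of_hasDerivAt (fun x _ => hG x)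
      (hggc.intervalIntegrable 0 L)
  -- boundary values
  have hGL : G L = 0 := by
    simp [hGdef, hbcL, hbcL1]
  have hG0 : G 0 = β * Complex.normSq g0 := by
    simp [hGdef, hbc0, ← hg0]
  -- a.e. rewrite of the integrand using the PDE
  have haeL : ∀ᵐ x : ℝ ∂volume, x ≠ L := by
    rw [MeasureTheory.ae_iff]
    simp only [not_not, Set.setOf_eq_eq_singleton]
    exact measure_singleton L
  have hIoc : Ι (0:ℝ) L = Ioc 0 L := Set.uIoc_of_le hL.le
  have hcongr : ∀ᵐ x : ℝ ∂volume, x ∈ Ι (0:ℝ) L →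
      2 * ((starRingEnd ℂ) (w x t) * pd2 w x t).re = gg x + ψ x := by
    filter_upwards [haeL] with x hxL hx
    rw [hIoc] at hx
    have hx' : x ∈ Set.Ioo (0:ℝ) L := ⟨hx.1, lt_of_le_of_ne hx.2 hxL⟩
    have hp := hpde x hx'
    have hwt : pd2 w x t = -(β:ℂ) * pd1 (pd1 (pd1 w)) x t + Complex.I * (α:ℂ) * pd1 (pd1 w) x t
        - (δ:ℂ) * pd1 w x t - (r:ℂ) * w x t + c x := by
      rw [hc]
      linear_combination (-Complex.I) * hp +
        (pd2 w x t + (β:ℂ) * pd1 (pd1 (pd1 w)) x t + (δ:ℂ) * pd1 w x t + (r:ℂ) * w x t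
          - (β:ℂ) * a x * g0) * Complex.I_mul_I
    rw [hwt]
    simp only [hggdef, hψ, hc, Complex.add_re, Complex.add_im, Complex.sub_re, Complex.sub_im,
      Complex.mul_re, Complex.mul_im, Complex.conj_re, Complex.conj_im, Complex.neg_re,
      Complex.neg_im, Complex.I_re, Complex.I_im, Complex.ofReal_re, Complex.ofReal_im,
      Complex.normSq_apply]
    ring
  -- integrability facts
  have hIcc : Set.uIcc (0:ℝ) L = Icc 0 L := Set.uIcc_of_le hL.le
  have hwcont : Continuous (fun x => w x t) := continuous_slice1 hw.continuous t
  have hccont : ContinuousOn c (Icc 0 L) := by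
    rw [hc]
    exact (((ha.const_smul ((β:ℂ))).mul continuousOn_const).sub
      (((hPi₁.mul continuousOn_const)).const_smul Complex.I)).sub
      (((hPi₂.mul continuousOn_const)).const_smul Complex.I)
  have hconjw : Continuous (fun x => (starRingEnd ℂ) (w x t)) :=
    Complex.continuous_conj.comp hwcont
  have hψcont : ContinuousOn ψ (Icc 0 L) := by
    rw [hψ]
    refine ContinuousOn.add ?_ ?_
    · exact continuousOn_const.mul ((Complex.continuous_normSq.comp hwcont).continuousOn)
    · exact ((Complex.continuous_re.comp_continuousOn
        ((hconjw.continuousOn).mul hccont)).const_smul (2:ℝ))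
  have hψint : IntervalIntegrable ψ volume 0 L :=
    (hIcc ▸ hψcont).intervalIntegrable
  have hwcint : IntervalIntegrable (fun x => (starRingEnd ℂ) (w x t) * c x) volume 0 L :=
    (hIcc ▸ ((hconjw.continuousOn).mul hccont)).intervalIntegrable
  -- split the integral
  have hsplit : (∫ x in (0:ℝ)..L, 2 * ((starRingEnd ℂ) (w x t) * pd2 w x t).re)
      = (∫ x in (0:ℝ)..L, gg x) + (∫ x in (0:ℝ)..L, ψ x) := by
    rw [intervalIntegral.integral_congr_ae hcongr]
    exact intervalIntegral.integral_add (hggc.intervalIntegrable 0 L) hψint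
  -- compute ∫ ψ
  have hnsint : IntervalIntegrable (fun x => Complex.normSq (w x t)) volume 0 L :=
    (Complex.continuous_normSq.comp hwcont).intervalIntegrable 0 L
  have hψval : (∫ x in (0:ℝ)..L, ψ x)
      = -(2*r) * (∫ x in (0:ℝ)..L, Complex.normSq (w x t))
        + 2 * (∫ x in (0:ℝ)..L, (starRingEnd ℂ) (w x t) * c x).re := by
    rw [hψ]
    rw [intervalIntegral.integral_add (hnsint.const_mul _)
      ((((hIcc ▸ (Complex.continuous_re.comp_continuousOn
        ((hconjw.continuousOn).mul hccont))) :
        ContinuousOn _ (Set.uIcc (0:ℝ) L)).intervalIntegrable).const_mul (2:ℝ)),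
      intervalIntegral.integral_const_mul, intervalIntegral.integral_const_mul]
    congr 1
    have := Complex.reCLM.intervalIntegral_comp_comm hwcint
    simp only [Complex.reCLM_apply] at this
    rw [this]
  -- compute the complex integral
  have hprod : (∫ x in (0:ℝ)..L, (starRingEnd ℂ) (w x t) * c x)
      = (β:ℂ) * g0 * (∫ x in (0:ℝ)..L, (starRingEnd ℂ) (w x t) * a x)
        - Complex.I * g₁ t * (∫ x in (0:ℝ)..L, (starRingEnd ℂ) (w x t) * Pi₁ x)
        - Complex.I * g₂ t * (∫ x in (0:ℝ)..L, (starRingEnd ℂ) (w x t) * Pi₂ x) := by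
    have ia : IntervalIntegrable (fun x => (starRingEnd ℂ) (w x t) * a x) volume 0 L :=
      (hIcc ▸ ((hconjw.continuousOn).mul ha)).intervalIntegrable
    have i1 : IntervalIntegrable (fun x => (starRingEnd ℂ) (w x t) * Pi₁ x) volume 0 L :=
      (hIcc ▸ ((hconjw.continuousOn).mul hPi₁)).intervalIntegrable
    have i2 : IntervalIntegrable (fun x => (starRingEnd ℂ) (w x t) * Pi₂ x) volume 0 L :=
      (hIcc ▸ ((hconjw.continuousOn).mul hPi₂)).intervalIntegrable
    have h1 : (fun x => (starRingEnd ℂ) (w x t) * c x)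
        = fun x => ((β:ℂ) * g0) * ((starRingEnd ℂ) (w x t) * a x)
          - (Complex.I * g₁ t) * ((starRingEnd ℂ) (w x t) * Pi₁ x)
          - (Complex.I * g₂ t) * ((starRingEnd ℂ) (w x t) * Pi₂ x) := by
      funext x
      simp only [hc]
      ring
    rw [h1]
    rw [intervalIntegral.integral_sub ((ia.const_mul _).sub (i1.const_mul _)) (i2.const_mul _),
      intervalIntegral.integral_sub (ia.const_mul _) (i1.const_mul _),
      intervalIntegral.integral_const_mul, intervalIntegral.integral_const_mul,
      intervalIntegral.integral_const_mul]
  rw [hsplit, hFTC, hGL, hG0, hψval, hprod]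
  ring


theorem Ederiv_le (β α δ r L ε : ℝ) (hβ : 0 < β) (hL : 0 < L) (hε : 0 < ε)
    (a Pi₁ Pi₂ : ℝ → ℂ)
    (ha : ContinuousOn a (Set.Icc (0:ℝ) L))
    (hPi₁ : ContinuousOn Pi₁ (Set.Icc (0:ℝ) L))
    (hPi₂ : ContinuousOn Pi₂ (Set.Icc (0:ℝ) L))
    (g₁ g₂ : ℝ → ℂ)
    (w : ℝ → ℝ → ℂ) (hw : ContDiff ℝ (⊤ : ℕ∞) (Function.uncurry w))
    (t : ℝ) (ht : 0 < t)
    (hpde : ∀ x ∈ Set.Ioo (0:ℝ) L,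
      Complex.I * pd2 w x t + Complex.I * (β : ℂ) * pd1 (pd1 (pd1 w)) x t
        + (α : ℂ) * pd1 (pd1 w) x t + Complex.I * (δ : ℂ) * pd1 w x t
        + Complex.I * (r : ℂ) * w x t
        = Complex.I * (β : ℂ) * a x * pd1 w 0 t + Pi₁ x * g₁ t + Pi₂ x * g₂ t)
    (hbc0 : w 0 t = 0) (hbcL : w L t = 0) (hbcL1 : pd1 w L t = 0)
    (ν : ℝ)
    (hνdef : ν = r - β / 2 * (∫ x in (0:ℝ)..L, ‖a x‖ ^ 2)
      - ε * β * ((∫ x in (0:ℝ)..L, ‖Pi₁ x‖ ^ 2)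
        + ∫ x in (0:ℝ)..L, ‖Pi₂ x‖ ^ 2)) :
    (∫ x in (0:ℝ)..L, 2 * ((starRingEnd ℂ) (w x t) * pd2 w x t).re)
      ≤ -2 * ν * (∫ x in (0:ℝ)..L, Complex.normSq (w x t))
        + (Complex.normSq (g₁ t) + Complex.normSq (g₂ t)) / (2 * ε * β) := by
  rw [Ederiv_eq β α δ r L hβ hL a Pi₁ Pi₂ ha hPi₁ hPi₂ g₁ g₂ w hw t ht hpde hbc0 hbcL hbcL1]
  set E := ∫ x in (0:ℝ)..L, Complex.normSq (w x t) with hE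
  set Sa := ∫ x in (0:ℝ)..L, (starRingEnd ℂ) (w x t) * a x with hSa
  set S1 := ∫ x in (0:ℝ)..L, (starRingEnd ℂ) (w x t) * Pi₁ x with hS1
  set S2 := ∫ x in (0:ℝ)..L, (starRingEnd ℂ) (w x t) * Pi₂ x with hS2
  set g0 := pd1 w 0 t with hg0
  have hconjw : Continuous (fun x => (starRingEnd ℂ) (w x t)) :=
    Complex.continuous_conj.comp (continuous_slice1 hw.continuous t)
  have hconjE : (∫ x in (0:ℝ)..L, Complex.normSq ((starRingEnd ℂ) (w x t))) = E := by
    rw [hE]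
    exact intervalIntegral.integral_congr fun x _ => Complex.normSq_conj _
  -- Cauchy-Schwarz bounds
  have hCSa : ‖Sa‖ ^ 2 ≤ E * (∫ x in (0:ℝ)..L, Complex.normSq (a x)) := by
    have := cs_complex hL.le hconjw.continuousOn ha
    rwa [hconjE] at this
  have hCS1 : ‖S1‖ ^ 2 ≤ E * (∫ x in (0:ℝ)..L, Complex.normSq (Pi₁ x)) := by
    have := cs_complex hL.le hconjw.continuousOn hPi₁
    rwa [hconjE] at this
  have hCS2 : ‖S2‖ ^ 2 ≤ E * (∫ x in (0:ℝ)..L, Complex.normSq (Pi₂ x)) := by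
    have := cs_complex hL.le hconjw.continuousOn hPi₂
    rwa [hconjE] at this
  -- re bound
  have hre : ((β:ℂ) * g0 * Sa - Complex.I * g₁ t * S1 - Complex.I * g₂ t * S2).re
      ≤ β * (‖g0‖ * ‖Sa‖)
        + ‖g₁ t‖ * ‖S1‖ + ‖g₂ t‖ * ‖S2‖ := by
    calc ((β:ℂ) * g0 * Sa - Complex.I * g₁ t * S1 - Complex.I * g₂ t * S2).re
        ≤ ‖(β:ℂ) * g0 * Sa - Complex.I * g₁ t * S1 - Complex.I * g₂ t * S2‖ :=
          Complex.re_le_norm _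
      _ ≤ ‖(β:ℂ) * g0 * Sa‖ + ‖Complex.I * g₁ t * S1‖
          + ‖Complex.I * g₂ t * S2‖ := abs_sub_sub_le _ _ _
      _ = β * (‖g0‖ * ‖Sa‖)
          + ‖g₁ t‖ * ‖S1‖ + ‖g₂ t‖ * ‖S2‖ := by
          simp only [norm_mul, Complex.norm_I, Complex.norm_real, Real.norm_eq_abs, abs_of_pos hβ]
          ring
  -- nonnegativity
  have hEnn : 0 ≤ E := intervalIntegral.integral_nonneg hL.le fun u _ => Complex.normSq_nonneg _
  have hNann : 0 ≤ ∫ x in (0:ℝ)..L, Complex.normSq (a x) :=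
    intervalIntegral.integral_nonneg hL.le fun u _ => Complex.normSq_nonneg _
  have hN1nn : 0 ≤ ∫ x in (0:ℝ)..L, Complex.normSq (Pi₁ x) :=
    intervalIntegral.integral_nonneg hL.le fun u _ => Complex.normSq_nonneg _
  have hN2nn : 0 ≤ ∫ x in (0:ℝ)..L, Complex.normSq (Pi₂ x) :=
    intervalIntegral.integral_nonneg hL.le fun u _ => Complex.normSq_nonneg _
  -- ν in terms of normSq integrals
  have hν' : ν = r - β / 2 * (∫ x in (0:ℝ)..L, Complex.normSq (a x))
      - ε * β * ((∫ x in (0:ℝ)..L, Complex.normSq (Pi₁ x))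
        + ∫ x in (0:ℝ)..L, Complex.normSq (Pi₂ x)) := by
    rw [hνdef]
    congr 2
    · congr 1
      exact intervalIntegral.integral_congr fun x _ => Complex.sq_norm _
    · congr 1
      · exact intervalIntegral.integral_congr fun x _ => Complex.sq_norm _
      · exact intervalIntegral.integral_congr fun x _ => Complex.sq_norm _
  have harith := estimate_arith β ε r E
    (∫ x in (0:ℝ)..L, Complex.normSq (a x)) (∫ x in (0:ℝ)..L, Complex.normSq (Pi₁ x))
    (∫ x in (0:ℝ)..L, Complex.normSq (Pi₂ x))
    (‖g0‖) (‖Sa‖) (‖S1‖) (‖S2‖)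
    (‖g₁ t‖) (‖g₂ t‖) ν hβ hε hEnn hNann hN1nn hN2nn
    (norm_nonneg _) (norm_nonneg _) (norm_nonneg _) (norm_nonneg _)
    (norm_nonneg _) (norm_nonneg _) hCSa hCS1 hCS2 hν'
  have hns : Complex.normSq g0 = ‖g0‖ ^ 2 := (Complex.sq_norm _).symm
  have hns1 : Complex.normSq (g₁ t) = ‖g₁ t‖ ^ 2 := (Complex.sq_norm _).symm
  have hns2 : Complex.normSq (g₂ t) = ‖g₂ t‖ ^ 2 := (Complex.sq_norm _).symm
  rw [hns, hns1, hns2]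
  calc -β * ‖g0‖ ^ 2 - 2 * r * E
        + 2 * ((β:ℂ) * g0 * Sa - Complex.I * g₁ t * S1 - Complex.I * g₂ t * S2).re
      ≤ -β * ‖g0‖ ^ 2 - 2 * r * E
        + 2 * (β * (‖g0‖ * ‖Sa‖)
          + ‖g₁ t‖ * ‖S1‖ + ‖g₂ t‖ * ‖S2‖) := by
        linarith [hre]
    _ ≤ -2 * ν * E + (‖g₁ t‖ ^ 2 + ‖g₂ t‖ ^ 2) / (2 * ε * β) := by
        have := harith
        linarith [this]

end Aux

section Main
open Complex Set Metric

theorem stmt6 (β α δ r L ε K μ : ℝ) (hβ : 0 < β) (hr : 0 < r) (hL : 0 < L)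
    (hε : 0 < ε) (hK : 0 ≤ K)
    (a Pi₁ Pi₂ : ℝ → ℂ)
    (ha : ContinuousOn a (Set.Icc (0:ℝ) L))
    (hPi₁ : ContinuousOn Pi₁ (Set.Icc (0:ℝ) L))
    (hPi₂ : ContinuousOn Pi₂ (Set.Icc (0:ℝ) L))
    (g₁ g₂ : ℝ → ℂ)
    (hg₁ : ContinuousOn g₁ (Set.Ici (0:ℝ)))
    (hg₂ : ContinuousOn g₂ (Set.Ici (0:ℝ)))
    (hgdec : ∀ t : ℝ, 0 ≤ t →
      ‖g₁ t‖ ^ 2 + ‖g₂ t‖ ^ 2 ≤ K ^ 2 * Real.exp (-2 * μ * t))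
    (w : ℝ → ℝ → ℂ) (hw : ContDiff ℝ (⊤ : ℕ∞) (Function.uncurry w))
    (hpde : ∀ x ∈ Set.Ioo (0:ℝ) L, ∀ t : ℝ, 0 < t →
      Complex.I * pd2 w x t + Complex.I * (β : ℂ) * pd1 (pd1 (pd1 w)) x t
        + (α : ℂ) * pd1 (pd1 w) x t + Complex.I * (δ : ℂ) * pd1 w x t
        + Complex.I * (r : ℂ) * w x t
        = Complex.I * (β : ℂ) * a x * pd1 w 0 t + Pi₁ x * g₁ t + Pi₂ x * g₂ t)
    (hbc : ∀ t : ℝ, 0 ≤ t → w 0 t = 0 ∧ w L t = 0 ∧ pd1 w L t = 0)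
    (ν : ℝ)
    (hνdef : ν = r - β / 2 * (∫ x in (0:ℝ)..L, ‖a x‖ ^ 2)
      - ε * β * ((∫ x in (0:ℝ)..L, ‖Pi₁ x‖ ^ 2)
        + ∫ x in (0:ℝ)..L, ‖Pi₂ x‖ ^ 2))
    (hνμ : ν < μ) :
    ∀ t : ℝ, 0 ≤ t →
      (∫ x in (0:ℝ)..L, ‖w x t‖ ^ 2) ≤
        Real.exp (-2 * ν * t) *
          ((∫ x in (0:ℝ)..L, ‖w x 0‖ ^ 2)
            + K ^ 2 / (4 * ε * β * (μ - ν))) := by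
  intro t htnn
  set E : ℝ → ℝ := fun s => ∫ x in (0:ℝ)..L, Complex.normSq (w x s) with hEdef
  set e : ℝ → ℝ := fun s => ∫ x in (0:ℝ)..L, 2 * ((starRingEnd ℂ) (w x s) * pd2 w x s).re
    with hedef
  have hEd : ∀ s : ℝ, HasDerivAt E (e s) s := fun s => E_hasDerivAt w hw hL s
  have hEcont : Continuous E := by
    refine continuous_iff_continuousAt.mpr fun s => (hEd s).continuousAt
  have hμν : 0 < μ - ν := by linarith
  set C0 : ℝ := K ^ 2 / (4 * ε * β * (μ - ν)) with hC0def
  have hC0nn : 0 ≤ C0 := by positivity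
  set F : ℝ → ℝ := fun s => Real.exp (2 * ν * s) * E s
      + C0 * Real.exp (-(2 * (μ - ν)) * s) with hFdef
  have hexp1 : ∀ s : ℝ, HasDerivAt (fun u => Real.exp (2 * ν * u))
      (2 * ν * Real.exp (2 * ν * s)) s := by
    intro s
    have h : HasDerivAt (fun u : ℝ => 2 * ν * u) (2 * ν) s := by
      simpa using (hasDerivAt_id s).const_mul (2 * ν)
    simpa [mul_comm] using h.exp
  have hexp2 : ∀ s : ℝ, HasDerivAt (fun u => Real.exp (-(2 * (μ - ν)) * u))
      (-(2 * (μ - ν)) * Real.exp (-(2 * (μ - ν)) * s)) s := by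
    intro s
    have h : HasDerivAt (fun u : ℝ => -(2 * (μ - ν)) * u) (-(2 * (μ - ν))) s := by
      simpa using (hasDerivAt_id s).const_mul (-(2 * (μ - ν)))
    simpa [mul_comm] using h.exp
  have hFd : ∀ s : ℝ, HasDerivAt F
      (2 * ν * Real.exp (2 * ν * s) * E s + Real.exp (2 * ν * s) * e s
        + C0 * (-(2 * (μ - ν)) * Real.exp (-(2 * (μ - ν)) * s))) s := by
    intro s
    exact ((hexp1 s).mul (hEd s)).add ((hexp2 s).const_mul C0)
  have hkey : 2 * (μ - ν) * C0 = K ^ 2 / (2 * ε * β) := by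
    rw [hC0def]
    field_simp
    ring
  -- deriv F ≤ 0 on Ioi 0
  have hderivF : ∀ s ∈ Set.Ioi (0:ℝ), deriv F s ≤ 0 := by
    intro s hs
    rw [(hFd s).deriv]
    have hEle := Ederiv_le β α δ r L ε hβ hL hε a Pi₁ Pi₂ ha hPi₁ hPi₂ g₁ g₂ w hw s hs
      (fun x hx => hpde x hx s hs) (hbc s hs.le).1 (hbc s hs.le).2.1 (hbc s hs.le).2.2 ν hνdef
    have hg : Complex.normSq (g₁ s) + Complex.normSq (g₂ s) ≤ K ^ 2 * Real.exp (-2 * μ * s) := by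
      have := hgdec s hs.le
      rwa [Complex.sq_norm, Complex.sq_norm] at this
    have hexpnn : 0 < Real.exp (2 * ν * s) := Real.exp_pos _
    have h2εβ : 0 < 2 * ε * β := by positivity
    have hstep : Real.exp (2 * ν * s) * (2 * ν * E s + e s)
        ≤ Real.exp (2 * ν * s) * (K ^ 2 * Real.exp (-2 * μ * s) / (2 * ε * β)) := by
      apply mul_le_mul_of_nonneg_left _ hexpnn.le
      have : e s ≤ -2 * ν * E s
          + (Complex.normSq (g₁ s) + Complex.normSq (g₂ s)) / (2 * ε * β) := hEle
      have hg' : (Complex.normSq (g₁ s) + Complex.normSq (g₂ s)) / (2 * ε * β)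
          ≤ K ^ 2 * Real.exp (-2 * μ * s) / (2 * ε * β) := by gcongr
      linarith
    have hexpeq : Real.exp (2 * ν * s) * (K ^ 2 * Real.exp (-2 * μ * s) / (2 * ε * β))
        = (K ^ 2 / (2 * ε * β)) * Real.exp (-(2 * (μ - ν)) * s) := by
      have hh : Real.exp (2 * ν * s) * Real.exp (-2 * μ * s)
          = Real.exp (-(2 * (μ - ν)) * s) := by
        rw [← Real.exp_add]; ring_nf
      rw [← hh]; ring
    have hlast : C0 * (-(2 * (μ - ν)) * Real.exp (-(2 * (μ - ν)) * s))
        = -(K ^ 2 / (2 * ε * β)) * Real.exp (-(2 * (μ - ν)) * s) := by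
      rw [← hkey]; ring
    calc 2 * ν * Real.exp (2 * ν * s) * E s + Real.exp (2 * ν * s) * e s
          + C0 * (-(2 * (μ - ν)) * Real.exp (-(2 * (μ - ν)) * s))
        = Real.exp (2 * ν * s) * (2 * ν * E s + e s)
          + C0 * (-(2 * (μ - ν)) * Real.exp (-(2 * (μ - ν)) * s)) := by ring
      _ ≤ Real.exp (2 * ν * s) * (K ^ 2 * Real.exp (-2 * μ * s) / (2 * ε * β))
          + C0 * (-(2 * (μ - ν)) * Real.exp (-(2 * (μ - ν)) * s)) := by linarith
      _ = (K ^ 2 / (2 * ε * β)) * Real.exp (-(2 * (μ - ν)) * s)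
          + (-(K ^ 2 / (2 * ε * β)) * Real.exp (-(2 * (μ - ν)) * s)) := by
          rw [hexpeq, hlast]
      _ = 0 := by ring
  have hant : AntitoneOn F (Set.Ici (0:ℝ)) := by
    apply antitoneOn_of_deriv_nonpos (convex_Ici 0)
    · exact (((Real.continuous_exp.comp (continuous_const.mul continuous_id)).mul hEcont).add
        (continuous_const.mul (Real.continuous_exp.comp
          (continuous_const.mul continuous_id)))).continuousOn
    · intro s hs
      exact ((hFd s).differentiableAt).differentiableWithinAt
    · intro s hs
      rw [interior_Ici] at hs
      exact hderivF s hs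
  have hF0 : F 0 = E 0 + C0 := by simp [hFdef]
  have hFt : F t ≤ F 0 := hant Set.self_mem_Ici htnn htnn
  have hexpt : 0 < Real.exp (2 * ν * t) := Real.exp_pos _
  have hEt : Real.exp (2 * ν * t) * E t ≤ E 0 + C0 := by
    have h1 : 0 ≤ C0 * Real.exp (-(2 * (μ - ν)) * t) := by positivity
    have := hFt
    rw [hF0] at this
    simp only [hFdef] at this
    linarith
  -- conclude
  have hgoal : E t ≤ Real.exp (-2 * ν * t) * (E 0 + C0) := by
    have hinv : Real.exp (-2 * ν * t) = (Real.exp (2 * ν * t))⁻¹ := by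
      rw [← Real.exp_neg]; ring_nf
    rw [hinv, ← div_eq_inv_mul, le_div_iff₀ hexpt]
    linarith [hEt]
  have hconv1 : (∫ x in (0:ℝ)..L, ‖w x t‖ ^ 2) = E t :=
    intervalIntegral.integral_congr fun x _ => Complex.sq_norm _
  have hconv0 : (∫ x in (0:ℝ)..L, ‖w x 0‖ ^ 2) = E 0 :=
    intervalIntegral.integral_congr fun x _ => Complex.sq_norm _
  rw [hconv1, hconv0]
  exact hgoal

end Main
end
end

section
/- Let β > 0, α, δ ∈ ℝ, L > 0, T > 0. There exists a constant C > 0 depending only on β, α, δ and L such that the following holds: if y : [0,L]×[0,T] → ℂ is smooth and satisfies i y_t + iβ y_{xxx} + α y_{xx} + iδ y_x = 0 on (0,L)×(0,T), with y(0,t) = y(L,t) = y_x(L,t) = 0 for all t ∈ [0,T], then ∫₀ᵀ ∫₀ᴸ ( |y(x,t)|² + |y_x(x,t)|² ) dx dt ≤ C (1 + T) ∫₀ᴸ |y(x,0)|² dx. -/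
noncomputable section

open MeasureTheory

def D1 (f : ℝ × ℝ → ℂ) : ℝ × ℝ → ℂ := fun p => fderiv ℝ f p (1,0)
def D2 (f : ℝ × ℝ → ℂ) : ℝ × ℝ → ℂ := fun p => fderiv ℝ f p (0,1)

lemma contDiff_D1 {f : ℝ × ℝ → ℂ} (hf : ContDiff ℝ (⊤ : ℕ∞) f) : ContDiff ℝ (⊤ : ℕ∞) (D1 f) :=
  (ContinuousLinearMap.apply ℝ ℂ ((1:ℝ),(0:ℝ))).contDiff.comp (hf.fderiv_right (by simp))

lemma contDiff_D2 {f : ℝ × ℝ → ℂ} (hf : ContDiff ℝ (⊤ : ℕ∞) f) : ContDiff ℝ (⊤ : ℕ∞) (D2 f) :=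
  (ContinuousLinearMap.apply ℝ ℂ ((0:ℝ),(1:ℝ))).contDiff.comp (hf.fderiv_right (by simp))

lemma hasDerivAt_D1 {f : ℝ × ℝ → ℂ} (hf : ContDiff ℝ (⊤ : ℕ∞) f) (x t : ℝ) :
    HasDerivAt (fun x' => f (x', t)) (D1 f (x, t)) x := by
  have h1 : HasDerivAt (fun x' : ℝ => (x', t)) ((1:ℝ), (0:ℝ)) x :=
    (hasDerivAt_id x).prodMk (hasDerivAt_const x t)
  exact ((hf.differentiable (by simp) (x,t)).hasFDerivAt).comp_hasDerivAt x h1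

lemma hasDerivAt_D2 {f : ℝ × ℝ → ℂ} (hf : ContDiff ℝ (⊤ : ℕ∞) f) (x t : ℝ) :
    HasDerivAt (fun t' => f (x, t')) (D2 f (x, t)) t := by
  have h1 : HasDerivAt (fun t' : ℝ => (x, t')) ((0:ℝ), (1:ℝ)) t :=
    (hasDerivAt_const t x).prodMk (hasDerivAt_id t)
  exact ((hf.differentiable (by simp) (x,t)).hasFDerivAt).comp_hasDerivAt t h1

lemma pd1_eq_s8 {y : ℝ → ℝ → ℂ} (hf : ContDiff ℝ (⊤ : ℕ∞) (Function.uncurry y)) :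
    pd1 y = fun x t => D1 (Function.uncurry y) (x, t) := by
  funext x t
  exact ((hasDerivAt_D1 hf x t).deriv)

lemma pd2_eq_s8 {y : ℝ → ℝ → ℂ} (hf : ContDiff ℝ (⊤ : ℕ∞) (Function.uncurry y)) :
    pd2 y = fun x t => D2 (Function.uncurry y) (x, t) := by
  funext x t
  exact ((hasDerivAt_D2 hf x t).deriv)

lemma derivNormSq {g : ℝ → ℂ} {e' : ℂ} {t : ℝ} (hg : HasDerivAt g e' t) :
    HasDerivAt (fun s => Complex.normSq (g s))
      ((star (g t) * e' + g t * star e').re) t := by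
  have h1 : HasDerivAt (fun s => g s * star (g s)) (e' * star (g t) + g t * star e') t :=
    hg.mul hg.star
  have h2 := Complex.reCLM.hasFDerivAt.comp_hasDerivAt t h1
  have h3 : (⇑Complex.reCLM ∘ fun s => g s * star (g s)) = fun s => Complex.normSq (g s) := by
    funext s
    simp [Function.comp, ← starRingEnd_apply, Complex.mul_conj, ← Complex.ofReal_pow,
      Complex.sq_norm]
  rw [h3] at h2
  refine h2.congr_deriv ?_
  simp only [Complex.reCLM_apply]
  ring_nf

lemma derivG {a b c d e : ℝ → ℂ} {β α δ : ℝ} {x : ℝ}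
    (ha : HasDerivAt a (b x) x) (hb : HasDerivAt b (c x) x) (hc : HasDerivAt c (d x) x)
    (hpde : Complex.I * e x + Complex.I*β*d x + α*c x + Complex.I*δ*b x = 0) :
    HasDerivAt (fun x => -(β:ℂ)*(star (a x) * c x + a x * star (c x) - b x * star (b x))
      + (Complex.I*α*(star (a x)*b x - a x * star (b x)) - (δ:ℂ)*(a x * star (a x))))
    (star (a x) * e x + a x * star (e x)) x := by
  have he : e x = -(β:ℂ)*d x + Complex.I*α*c x - (δ:ℂ)*b x := by
    linear_combination (-Complex.I) * hpde + (e x + (β:ℂ)*d x + (δ:ℂ)*b x) * Complex.I_mul_I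
  have H :=
    ((((ha.star.mul hc).add (ha.mul hc.star)).sub (hb.mul hb.star)).const_mul (-(β:ℂ))).add
      ((((ha.star.mul hb).sub (ha.mul hb.star)).const_mul (Complex.I*(α:ℂ))).sub
        ((ha.mul ha.star).const_mul (δ:ℂ)))
  refine H.congr_deriv ?_
  rw [he]
  simp only [← starRingEnd_apply, map_add, map_mul, map_sub, map_neg, Complex.conj_I,
    Complex.conj_ofReal]
  ring

lemma derivH {a b c d e : ℝ → ℂ} {β α δ : ℝ} {x : ℝ}
    (ha : HasDerivAt a (b x) x) (hb : HasDerivAt b (c x) x) (hc : HasDerivAt c (d x) x)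
    (hpde : Complex.I * e x + Complex.I*β*d x + α*c x + Complex.I*δ*b x = 0) :
    HasDerivAt (fun x : ℝ => -(β:ℂ)*((x:ℂ)*(star (a x) * c x + a x * star (c x))
        - (star (a x) * b x + a x * star (b x)) - (x:ℂ)*(b x * star (b x)))
      + (Complex.I*α*((x:ℂ)*(star (a x)*b x - a x * star (b x)))
        - (δ:ℂ)*((x:ℂ)*(a x * star (a x)))))
    ((x:ℂ) * (star (a x) * e x + a x * star (e x)) + 3*(β:ℂ)*(b x * star (b x))
      + Complex.I*α*(star (a x) * b x - a x * star (b x)) - (δ:ℂ)*(a x * star (a x))) x := by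
  have he : e x = -(β:ℂ)*d x + Complex.I*α*c x - (δ:ℂ)*b x := by
    linear_combination (-Complex.I) * hpde + (e x + (β:ℂ)*d x + (δ:ℂ)*b x) * Complex.I_mul_I
  have hx : HasDerivAt (fun x : ℝ => (x:ℂ)) 1 x := (hasDerivAt_id x).ofReal_comp
  have H :=
    (((hx.mul ((ha.star.mul hc).add (ha.mul hc.star))).sub
        ((ha.star.mul hb).add (ha.mul hb.star))).sub
          (hx.mul (hb.mul hb.star))).const_mul (-(β:ℂ)) |>.add
      (((hx.mul ((ha.star.mul hb).sub (ha.mul hb.star))).const_mul (Complex.I*(α:ℂ))).sub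
        ((hx.mul (ha.mul ha.star)).const_mul (δ:ℂ)))
  have hval : ((x:ℂ) * (star (a x) * e x + a x * star (e x)) + 3*(β:ℂ)*(b x * star (b x))
      + Complex.I*α*(star (a x) * b x - a x * star (b x)) - (δ:ℂ)*(a x * star (a x)))
      = (-(β:ℂ) *
        (1 * (star (a x) * c x + a x * star (c x)) +
              (x:ℂ) * (star (b x) * c x + star (a x) * d x + (b x * star (c x) + a x * star (d x))) -
            (star (b x) * b x + star (a x) * c x + (b x * star (b x) + a x * star (c x))) -
          (1 * (b x * star (b x)) + (x:ℂ) * (c x * star (b x) + b x * star (c x)))) +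
      (Complex.I * (α:ℂ) *
          (1 * (star (a x) * b x - a x * star (b x)) +
            (x:ℂ) * (star (b x) * b x + star (a x) * c x - (b x * star (b x) + a x * star (c x)))) -
        (δ:ℂ) * (1 * (a x * star (a x)) + (x:ℂ) * (b x * star (a x) + a x * star (b x))))) := by
    rw [he]
    simp only [← starRingEnd_apply, map_add, map_mul, map_sub, map_neg, Complex.conj_I,
      Complex.conj_ofReal]
    ring
  rw [hval]
  exact H

lemma swapInt {F : ℝ × ℝ → ℝ} (hF : Continuous F) {L s : ℝ} (hL : 0 ≤ L) (hs : 0 ≤ s) :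
    ∫ x in (0:ℝ)..L, (∫ t in (0:ℝ)..s, F (x,t)) = ∫ t in (0:ℝ)..s, (∫ x in (0:ℝ)..L, F (x,t)) := by
  have hInt : Integrable (Function.uncurry fun x t => F (x, t))
      ((volume.restrict (Set.Ioc (0:ℝ) L)).prod (volume.restrict (Set.Ioc (0:ℝ) s))) := by
    rw [Measure.prod_restrict]
    refine (IntegrableOn.mono_set ?_ (Set.prod_mono Set.Ioc_subset_Icc_self Set.Ioc_subset_Icc_self))
    exact hF.continuousOn.integrableOn_compact (isCompact_Icc.prod isCompact_Icc)
  have h1 := MeasureTheory.integral_integral_swap hInt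
  simp only [intervalIntegral.integral_of_le hL, intervalIntegral.integral_of_le hs] at *
  exact h1

lemma intervalIntegral_re {g : ℝ → ℂ} {a b : ℝ} (hg : IntervalIntegrable g volume a b) :
    (∫ x in a..b, g x).re = ∫ x in a..b, (g x).re := by
  simpa using (Complex.reCLM.intervalIntegral_comp_comm hg).symm

lemma ptBound {z w : ℂ} {β α : ℝ} (hβ : 0 < β) :
    -(Complex.I*(α:ℂ)*(star z * w - z * star w)).re
      ≤ β * Complex.normSq w + (α^2/β) * Complex.normSq z := by
  have hc : α^2/β*β = α^2 := div_mul_cancel₀ _ hβ.ne'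
  simp only [Complex.star_def, Complex.mul_re, Complex.mul_im, Complex.I_re, Complex.I_im,
    Complex.ofReal_re, Complex.ofReal_im, Complex.sub_re, Complex.sub_im, Complex.conj_re,
    Complex.conj_im, Complex.normSq_apply]
  nlinarith [sq_nonneg (β*w.im - α*z.re), sq_nonneg (β*w.re + α*z.im), hβ, hc,
    sq_nonneg (z.re), sq_nonneg (z.im), mul_pos hβ hβ]

theorem stmt8 (β α δ L : ℝ) (hβ : 0 < β) (hL : 0 < L) :
    ∃ C : ℝ, 0 < C ∧
      ∀ T : ℝ, 0 < T →
      ∀ y : ℝ → ℝ → ℂ,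
        ContDiff ℝ (⊤ : ℕ∞) (Function.uncurry y) →
        (∀ x ∈ Set.Ioo (0:ℝ) L, ∀ t ∈ Set.Ioo (0:ℝ) T,
          Complex.I * pd2 y x t + Complex.I * (β : ℂ) * pd1 (pd1 (pd1 y)) x t
            + (α : ℂ) * pd1 (pd1 y) x t + Complex.I * (δ : ℂ) * pd1 y x t = 0) →
        (∀ t ∈ Set.Icc (0:ℝ) T, y 0 t = 0 ∧ y L t = 0 ∧ pd1 y L t = 0) →
        (∫ t in (0:ℝ)..T, ∫ x in (0:ℝ)..L,
            (‖y x t‖ ^ 2 + ‖pd1 y x t‖ ^ 2))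
          ≤ C * (1 + T) * ∫ x in (0:ℝ)..L, ‖y x 0‖ ^ 2 := by
  refine ⟨1 + (L + α^2/β + |δ|)/(2*β), by positivity, ?_⟩
  intro T hT y hy hpde hbc
  set f : ℝ × ℝ → ℂ := Function.uncurry y with hfdef
  set b : ℝ × ℝ → ℂ := D1 f with hbdef
  set c : ℝ × ℝ → ℂ := D1 b with hcdef
  set d : ℝ × ℝ → ℂ := D1 c with hddef
  set e : ℝ × ℝ → ℂ := D2 f with hedef
  have hfc : Continuous f := hy.continuous
  have hbC : ContDiff ℝ (⊤ : ℕ∞) b := contDiff_D1 hy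
  have hcC : ContDiff ℝ (⊤ : ℕ∞) c := contDiff_D1 hbC
  have hdC : ContDiff ℝ (⊤ : ℕ∞) d := contDiff_D1 hcC
  have heC : ContDiff ℝ (⊤ : ℕ∞) e := contDiff_D2 hy
  have hbc' : Continuous b := hbC.continuous
  have hcc : Continuous c := hcC.continuous
  have hdc : Continuous d := hdC.continuous
  have hec : Continuous e := heC.continuous
  -- rewrite partial derivatives
  have hp1 : pd1 y = fun x t => b (x, t) := pd1_eq_s8 hy
  have hp11 : pd1 (pd1 y) = fun x t => c (x, t) := by
    rw [hp1]; exact pd1_eq_s8 hbC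
  have hp111 : pd1 (pd1 (pd1 y)) = fun x t => d (x, t) := by
    rw [hp11]; exact pd1_eq_s8 hcC
  have hp2 : pd2 y = fun x t => e (x, t) := pd2_eq_s8 hy
  -- PDE on the closed rectangle
  have hPDE : ∀ x ∈ Set.Icc (0:ℝ) L, ∀ t ∈ Set.Icc (0:ℝ) T,
      Complex.I * e (x,t) + Complex.I*β*d (x,t) + α*c (x,t) + Complex.I*δ*b (x,t) = 0 := by
    have hcont : Continuous (fun p : ℝ × ℝ =>
        Complex.I * e p + Complex.I*β*d p + α*c p + Complex.I*δ*b p) := by fun_prop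
    have h0 : Set.EqOn (fun p : ℝ × ℝ =>
        Complex.I * e p + Complex.I*β*d p + α*c p + Complex.I*δ*b p) 0
        (Set.Ioo (0:ℝ) L ×ˢ Set.Ioo (0:ℝ) T) := by
      intro p hp
      have h := hpde p.1 hp.1 p.2 hp.2
      rw [hp2, hp111, hp11, hp1] at h
      simpa using h
    have hcl := h0.closure hcont continuous_const
    intro x hx t ht
    have hmem : (x,t) ∈ closure (Set.Ioo (0:ℝ) L ×ˢ Set.Ioo (0:ℝ) T) := by
      rw [closure_prod_eq, closure_Ioo hL.ne, closure_Ioo hT.ne]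
      exact ⟨hx, ht⟩
    simpa using hcl hmem
  -- boundary conditions
  have ha0 : ∀ t ∈ Set.Icc (0:ℝ) T, f (0, t) = 0 := fun t ht => (hbc t ht).1
  have haL : ∀ t ∈ Set.Icc (0:ℝ) T, f (L, t) = 0 := fun t ht => (hbc t ht).2.1
  have hbL : ∀ t ∈ Set.Icc (0:ℝ) T, b (L, t) = 0 := by
    intro t ht
    have := (hbc t ht).2.2
    rwa [hp1] at this
  -- derivatives
  have hax : ∀ x t : ℝ, HasDerivAt (fun x' => f (x', t)) (b (x,t)) x :=
    fun x t => hasDerivAt_D1 hy x t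
  have hbx : ∀ x t : ℝ, HasDerivAt (fun x' => b (x', t)) (c (x,t)) x :=
    fun x t => hasDerivAt_D1 hbC x t
  have hcx : ∀ x t : ℝ, HasDerivAt (fun x' => c (x', t)) (d (x,t)) x :=
    fun x t => hasDerivAt_D1 hcC x t
  have hat : ∀ x t : ℝ, HasDerivAt (fun t' => f (x, t')) (e (x,t)) t :=
    fun x t => hasDerivAt_D2 hy x t
  -- the real quantities
  set dA : ℝ × ℝ → ℝ := fun p => (star (f p) * e p + f p * star (e p)).re with hdAdef
  set W : ℝ × ℝ → ℝ := fun p => (Complex.I*(α:ℂ)*(star (f p) * b p - f p * star (b p))).re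
    with hWdef
  have hdAc : Continuous dA := by fun_prop
  have hWc : Continuous W := by fun_prop
  have hnsq : Continuous Complex.normSq := by continuity
  -- FTC in time
  have hFTCt : ∀ x s : ℝ, ∫ t in (0:ℝ)..s, dA (x,t)
      = Complex.normSq (f (x,s)) - Complex.normSq (f (x,0)) := by
    intro x s
    refine intervalIntegral.integral_eq_sub_of_hasDerivAt
      (fun t _ => derivNormSq (hat x t)) ?_
    exact ((hdAc.comp (by fun_prop)).intervalIntegrable 0 s)
  -- first identity (mass)
  have int1 : ∀ t ∈ Set.Icc (0:ℝ) T,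
      ∫ x in (0:ℝ)..L, dA (x,t) = -β * Complex.normSq (b (0,t)) := by
    intro t ht
    have hG : ∀ x ∈ Set.uIcc (0:ℝ) L, HasDerivAt
        (fun x => -(β:ℂ)*(star (f (x,t)) * c (x,t) + f (x,t) * star (c (x,t))
            - b (x,t) * star (b (x,t)))
          + (Complex.I*(α:ℂ)*(star (f (x,t))*b (x,t) - f (x,t) * star (b (x,t)))
            - (δ:ℂ)*(f (x,t) * star (f (x,t)))))
        (star (f (x,t)) * e (x,t) + f (x,t) * star (e (x,t))) x := by
      intro x hx
      rw [Set.uIcc_of_le hL.le] at hx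
      exact derivG (a := fun x' => f (x',t)) (b := fun x' => b (x',t))
        (c := fun x' => c (x',t)) (d := fun x' => d (x',t)) (e := fun x' => e (x',t))
        (hax x t) (hbx x t) (hcx x t) (hPDE x hx t ht)
    have hInt : IntervalIntegrable
        (fun x => star (f (x,t)) * e (x,t) + f (x,t) * star (e (x,t))) volume 0 L := by
      apply Continuous.intervalIntegrable; fun_prop
    have hkey := intervalIntegral.integral_eq_sub_of_hasDerivAt hG hInt
    have hval : (∫ x in (0:ℝ)..L, (star (f (x,t)) * e (x,t) + f (x,t) * star (e (x,t))))
        = -(β:ℂ) * (b (0,t) * star (b (0,t))) := by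
      rw [hkey]
      simp only [haL t ht, hbL t ht, ha0 t ht, star_zero, mul_zero, zero_mul, sub_zero,
        zero_sub, add_zero, zero_add, neg_zero, neg_neg, sub_self, mul_neg]
    have hre := intervalIntegral_re hInt
    rw [hval] at hre
    have hre2 : (∫ x in (0:ℝ)..L, dA (x,t))
        = (-(β:ℂ) * (b (0,t) * star (b (0,t)))).re := hre.symm
    rw [hre2, Complex.star_def, Complex.mul_conj]
    simp [← Complex.ofReal_neg, ← Complex.ofReal_mul]
  -- second identity (weighted)
  have int2 : ∀ t ∈ Set.Icc (0:ℝ) T,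
      (∫ x in (0:ℝ)..L, x * dA (x,t))
        = -(3*β*(∫ x in (0:ℝ)..L, Complex.normSq (b (x,t))))
          - (∫ x in (0:ℝ)..L, W (x,t))
          + δ * (∫ x in (0:ℝ)..L, Complex.normSq (f (x,t))) := by
    intro t ht
    have hH : ∀ x ∈ Set.uIcc (0:ℝ) L, HasDerivAt
        (fun x : ℝ => -(β:ℂ)*((x:ℂ)*(star (f (x,t)) * c (x,t) + f (x,t) * star (c (x,t)))
            - (star (f (x,t)) * b (x,t) + f (x,t) * star (b (x,t)))
            - (x:ℂ)*(b (x,t) * star (b (x,t))))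
          + (Complex.I*(α:ℂ)*((x:ℂ)*(star (f (x,t))*b (x,t) - f (x,t) * star (b (x,t))))
            - (δ:ℂ)*((x:ℂ)*(f (x,t) * star (f (x,t))))))
        ((x:ℂ) * (star (f (x,t)) * e (x,t) + f (x,t) * star (e (x,t)))
          + 3*(β:ℂ)*(b (x,t) * star (b (x,t)))
          + Complex.I*(α:ℂ)*(star (f (x,t)) * b (x,t) - f (x,t) * star (b (x,t)))
          - (δ:ℂ)*(f (x,t) * star (f (x,t)))) x := by
      intro x hx
      rw [Set.uIcc_of_le hL.le] at hx
      exact derivH (a := fun x' => f (x',t)) (b := fun x' => b (x',t))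
        (c := fun x' => c (x',t)) (d := fun x' => d (x',t)) (e := fun x' => e (x',t))
        (hax x t) (hbx x t) (hcx x t) (hPDE x hx t ht)
    have hI1 : IntervalIntegrable
        (fun x : ℝ => (x:ℂ) * (star (f (x,t)) * e (x,t) + f (x,t) * star (e (x,t))))
        volume 0 L := by apply Continuous.intervalIntegrable; fun_prop
    have hI2 : IntervalIntegrable
        (fun x : ℝ => 3*(β:ℂ)*(b (x,t) * star (b (x,t)))) volume 0 L := by
      apply Continuous.intervalIntegrable; fun_prop
    have hI3 : IntervalIntegrable
        (fun x : ℝ => Complex.I*(α:ℂ)*(star (f (x,t)) * b (x,t) - f (x,t) * star (b (x,t))))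
        volume 0 L := by apply Continuous.intervalIntegrable; fun_prop
    have hI4 : IntervalIntegrable
        (fun x : ℝ => (δ:ℂ)*(f (x,t) * star (f (x,t)))) volume 0 L := by
      apply Continuous.intervalIntegrable; fun_prop
    have hkey := intervalIntegral.integral_eq_sub_of_hasDerivAt hH
      (((hI1.add hI2).add hI3).sub hI4)
    have hzero : (∫ x in (0:ℝ)..L,
        ((x:ℂ) * (star (f (x,t)) * e (x,t) + f (x,t) * star (e (x,t)))
          + 3*(β:ℂ)*(b (x,t) * star (b (x,t)))
          + Complex.I*(α:ℂ)*(star (f (x,t)) * b (x,t) - f (x,t) * star (b (x,t)))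
          - (δ:ℂ)*(f (x,t) * star (f (x,t))))) = 0 := by
      rw [hkey]
      simp [haL t ht, hbL t ht, ha0 t ht]
    rw [intervalIntegral.integral_sub ((hI1.add hI2).add hI3) hI4,
      intervalIntegral.integral_add (hI1.add hI2) hI3,
      intervalIntegral.integral_add hI1 hI2] at hzero
    have hre := congrArg Complex.re hzero
    simp only [Complex.add_re, Complex.sub_re, Complex.zero_re] at hre
    -- identify each real part
    have e1 : (∫ x in (0:ℝ)..L,
        ((x:ℂ) * (star (f (x,t)) * e (x,t) + f (x,t) * star (e (x,t))))).re
        = ∫ x in (0:ℝ)..L, x * dA (x,t) := by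
      rw [intervalIntegral_re hI1]
      apply intervalIntegral.integral_congr
      intro x _
      exact Complex.re_ofReal_mul _ _
    have e2 : (∫ x in (0:ℝ)..L, (3*(β:ℂ)*(b (x,t) * star (b (x,t))))).re
        = 3*β*(∫ x in (0:ℝ)..L, Complex.normSq (b (x,t))) := by
      rw [intervalIntegral_re hI2, ← intervalIntegral.integral_const_mul]
      apply intervalIntegral.integral_congr
      intro x _
      show (3*(β:ℂ)*(b (x,t) * star (b (x,t)))).re = 3*β*Complex.normSq (b (x,t))
      rw [Complex.star_def, Complex.mul_conj]
      have : 3*(β:ℂ) = ((3*β : ℝ) : ℂ) := by push_cast; ring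
      rw [this, ← Complex.ofReal_mul]
      simp
    have e3 : (∫ x in (0:ℝ)..L,
        (Complex.I*(α:ℂ)*(star (f (x,t)) * b (x,t) - f (x,t) * star (b (x,t))))).re
        = ∫ x in (0:ℝ)..L, W (x,t) := by
      rw [intervalIntegral_re hI3]
    have e4 : (∫ x in (0:ℝ)..L, ((δ:ℂ)*(f (x,t) * star (f (x,t))))).re
        = δ*(∫ x in (0:ℝ)..L, Complex.normSq (f (x,t))) := by
      rw [intervalIntegral_re hI4, ← intervalIntegral.integral_const_mul]
      apply intervalIntegral.integral_congr
      intro x _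
      show ((δ:ℂ)*(f (x,t) * star (f (x,t)))).re = δ*Complex.normSq (f (x,t))
      rw [Complex.star_def, Complex.mul_conj, ← Complex.ofReal_mul]
      simp
    rw [e1, e2, e3, e4] at hre
    linarith
  -- energy functionals
  set E : ℝ → ℝ := fun s => ∫ x in (0:ℝ)..L, Complex.normSq (f (x,s)) with hEdef
  set Bi : ℝ → ℝ := fun t => ∫ x in (0:ℝ)..L, Complex.normSq (b (x,t)) with hBidef
  set Wi : ℝ → ℝ := fun t => ∫ x in (0:ℝ)..L, W (x,t) with hWidef
  set XA : ℝ → ℝ := fun t => ∫ x in (0:ℝ)..L, x * dA (x,t) with hXAdef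
  have hEc : Continuous E := by
    apply intervalIntegral.continuous_parametric_intervalIntegral_of_continuous'
    fun_prop
  have hBic : Continuous Bi := by
    apply intervalIntegral.continuous_parametric_intervalIntegral_of_continuous'
    fun_prop
  have hWic : Continuous Wi := by
    apply intervalIntegral.continuous_parametric_intervalIntegral_of_continuous'
    fun_prop
  have hXAc : Continuous XA := by
    apply intervalIntegral.continuous_parametric_intervalIntegral_of_continuous'
    fun_prop
  have hE0 : ∀ s, 0 ≤ E s := by
    intro s
    exact intervalIntegral.integral_nonneg hL.le (fun x _ => Complex.normSq_nonneg _)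
  have hBi0 : ∀ s, 0 ≤ Bi s := by
    intro s
    exact intervalIntegral.integral_nonneg hL.le (fun x _ => Complex.normSq_nonneg _)
  -- energy decay
  have hEmono : ∀ s ∈ Set.Icc (0:ℝ) T, E s ≤ E 0 := by
    intro s hs
    have hi1 : IntervalIntegrable (fun x => Complex.normSq (f (x,s))) volume 0 L := by
      apply Continuous.intervalIntegrable; fun_prop
    have hi2 : IntervalIntegrable (fun x => Complex.normSq (f (x,0))) volume 0 L := by
      apply Continuous.intervalIntegrable; fun_prop
    have h1 : E s - E 0 = ∫ x in (0:ℝ)..L, (Complex.normSq (f (x,s)) - Complex.normSq (f (x,0))) := by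
      rw [intervalIntegral.integral_sub hi1 hi2]
    have h2 : E s - E 0 = ∫ u in (0:ℝ)..s, (∫ x in (0:ℝ)..L, dA (x,u)) := by
      rw [h1, ← swapInt hdAc hL.le hs.1]
      apply intervalIntegral.integral_congr
      intro x _
      exact (hFTCt x s).symm
    have h3 : (∫ u in (0:ℝ)..s, (∫ x in (0:ℝ)..L, dA (x,u)))
        = ∫ u in (0:ℝ)..s, (-β * Complex.normSq (b (0,u))) := by
      apply intervalIntegral.integral_congr
      intro u hu
      rw [Set.uIcc_of_le hs.1] at hu
      exact int1 u ⟨hu.1, le_trans hu.2 hs.2⟩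
    have h4 : (0:ℝ) ≤ ∫ u in (0:ℝ)..s, (β * Complex.normSq (b (0,u))) :=
      intervalIntegral.integral_nonneg hs.1
        (fun u _ => mul_nonneg hβ.le (Complex.normSq_nonneg _))
    have h5 : (∫ u in (0:ℝ)..s, (-β * Complex.normSq (b (0,u))))
        = -∫ u in (0:ℝ)..s, (β * Complex.normSq (b (0,u))) := by
      rw [← intervalIntegral.integral_neg]
      apply intervalIntegral.integral_congr
      intro u _
      ring
    have := h2.trans (h3.trans h5)
    linarith
  -- integral bound on E
  have hEint : ∫ t in (0:ℝ)..T, E t ≤ T * E 0 := by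
    have := intervalIntegral.integral_mono_on hT.le
      ((hEc.intervalIntegrable 0 T)) (intervalIntegrable_const : IntervalIntegrable (fun _ => E 0) volume 0 T) hEmono
    simpa using this
  -- the weighted-term integral
  have hXAint : -(L * E 0) ≤ ∫ t in (0:ℝ)..T, XA t := by
    have h1 : (∫ t in (0:ℝ)..T, XA t)
        = ∫ x in (0:ℝ)..L, (x * (Complex.normSq (f (x,T)) - Complex.normSq (f (x,0)))) := by
      rw [← swapInt (F := fun p => p.1 * dA p) (by fun_prop) hL.le hT.le]
      apply intervalIntegral.integral_congr
      intro x _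
      show (∫ t in (0:ℝ)..T, x * dA (x,t))
          = x * (Complex.normSq (f (x,T)) - Complex.normSq (f (x,0)))
      rw [intervalIntegral.integral_const_mul, hFTCt x T]
    have hi1 : IntervalIntegrable (fun x => x * Complex.normSq (f (x,T))) volume 0 L := by
      apply Continuous.intervalIntegrable; fun_prop
    have hi2 : IntervalIntegrable (fun x => x * Complex.normSq (f (x,0))) volume 0 L := by
      apply Continuous.intervalIntegrable; fun_prop
    have h2 : (∫ t in (0:ℝ)..T, XA t)
        = (∫ x in (0:ℝ)..L, x * Complex.normSq (f (x,T)))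
          - ∫ x in (0:ℝ)..L, x * Complex.normSq (f (x,0)) := by
      rw [h1, ← intervalIntegral.integral_sub hi1 hi2]
      apply intervalIntegral.integral_congr
      intro x _
      ring
    have h3 : (0:ℝ) ≤ ∫ x in (0:ℝ)..L, x * Complex.normSq (f (x,T)) :=
      intervalIntegral.integral_nonneg hL.le
        (fun x hx => mul_nonneg hx.1 (Complex.normSq_nonneg _))
    have h4 : (∫ x in (0:ℝ)..L, x * Complex.normSq (f (x,0))) ≤ L * E 0 := by
      have hle := intervalIntegral.integral_mono_on hL.le hi2
        (by apply Continuous.intervalIntegrable; fun_prop :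
          IntervalIntegrable (fun x => L * Complex.normSq (f (x,0))) volume 0 L)
        (fun x hx => mul_le_mul_of_nonneg_right hx.2 (Complex.normSq_nonneg _))
      rwa [intervalIntegral.integral_const_mul] at hle
    linarith
  -- main estimate for Bi
  have hBkey : 2*β*(∫ t in (0:ℝ)..T, Bi t) ≤ L * E 0 + (α^2/β + |δ|) * (T * E 0) := by
    have hpt : ∀ u ∈ Set.Icc (0:ℝ) T, 2*β*Bi u ≤ -XA u + (α^2/β + |δ|) * E u := by
      intro u hu
      have h2 : XA u = -(3*β*Bi u) - Wi u + δ * E u := int2 u hu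
      have h3 : -Wi u ≤ β * Bi u + (α^2/β) * E u := by
        have hmono := intervalIntegral.integral_mono_on hL.le
          (by apply Continuous.intervalIntegrable; fun_prop :
            IntervalIntegrable (fun x => -W (x,u)) volume 0 L)
          (by apply Continuous.intervalIntegrable; fun_prop :
            IntervalIntegrable (fun x => β * Complex.normSq (b (x,u))
              + (α^2/β) * Complex.normSq (f (x,u))) volume 0 L)
          (fun x _ => ptBound hβ)
        have hl : (∫ x in (0:ℝ)..L, -W (x,u)) = -Wi u := by
          rw [intervalIntegral.integral_neg]
        have hr : (∫ x in (0:ℝ)..L, (β * Complex.normSq (b (x,u))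
            + (α^2/β) * Complex.normSq (f (x,u)))) = β * Bi u + (α^2/β) * E u := by
          rw [intervalIntegral.integral_add
            (by apply Continuous.intervalIntegrable; fun_prop)
            (by apply Continuous.intervalIntegrable; fun_prop),
            intervalIntegral.integral_const_mul, intervalIntegral.integral_const_mul]
        rw [hl, hr] at hmono
        exact hmono
      have h4 : δ * E u ≤ |δ| * E u := mul_le_mul_of_nonneg_right (le_abs_self δ) (hE0 u)
      linarith
    have hint := intervalIntegral.integral_mono_on hT.le
      (by apply Continuous.intervalIntegrable; fun_prop :
        IntervalIntegrable (fun u => 2*β*Bi u) volume 0 T)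
      (by apply Continuous.intervalIntegrable; fun_prop :
        IntervalIntegrable (fun u => -XA u + (α^2/β + |δ|) * E u) volume 0 T)
      hpt
    rw [intervalIntegral.integral_const_mul,
      intervalIntegral.integral_add
        (by apply Continuous.intervalIntegrable; fun_prop)
        (by apply Continuous.intervalIntegrable; fun_prop),
      intervalIntegral.integral_neg, intervalIntegral.integral_const_mul] at hint
    have hknn : 0 ≤ α^2/β + |δ| := by positivity
    have hEintnn : 0 ≤ ∫ t in (0:ℝ)..T, E t :=
      intervalIntegral.integral_nonneg hT.le (fun u _ => hE0 u)
    nlinarith [mul_le_mul_of_nonneg_left hEint hknn]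
  -- conclusion
  have hgoalL : (fun t => ∫ x in (0:ℝ)..L,
      (‖y x t‖ ^ 2 + ‖pd1 y x t‖ ^ 2)) = fun t => E t + Bi t := by
    funext t
    rw [hp1]
    have hcongr : (fun x => ‖y x t‖ ^ 2
        + ‖(fun x t => b (x,t)) x t‖ ^ 2)
        = fun x => Complex.normSq (f (x,t)) + Complex.normSq (b (x,t)) := by
      funext x
      rw [Complex.sq_norm, Complex.sq_norm]
      rfl
    rw [hcongr, intervalIntegral.integral_add
      (by apply Continuous.intervalIntegrable; fun_prop)
      (by apply Continuous.intervalIntegrable; fun_prop)]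
  have hgoalR : (fun x => ‖y x 0‖ ^ 2) = fun x => Complex.normSq (f (x,0)) := by
    funext x
    rw [Complex.sq_norm]
    rfl
  rw [hgoalL, hgoalR]
  rw [intervalIntegral.integral_add (hEc.intervalIntegrable 0 T) (hBic.intervalIntegrable 0 T)]
  have hBinn : 0 ≤ ∫ t in (0:ℝ)..T, Bi t :=
    intervalIntegral.integral_nonneg hT.le (fun u _ => hBi0 u)
  have h2β : (0:ℝ) < 2*β := by linarith
  have hfrac : (∫ t in (0:ℝ)..T, Bi t)
      ≤ (L * E 0 + (α^2/β + |δ|) * (T * E 0))/(2*β) := by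
    rw [le_div_iff₀ h2β, mul_comm]
    exact hBkey
  have hnum : (L * E 0 + (α^2/β + |δ|) * (T * E 0))/(2*β)
      ≤ ((L + α^2/β + |δ|)/(2*β)) * ((1+T) * E 0) := by
    rw [div_mul_eq_mul_div, div_le_div_iff_of_pos_right h2β]
    nlinarith [mul_nonneg (mul_nonneg hL.le hT.le) (hE0 0),
      mul_nonneg (add_nonneg (div_nonneg (sq_nonneg α) hβ.le) (abs_nonneg δ)) (hE0 0)]
  have hE00 : 0 ≤ E 0 := hE0 0
  have hexp : (1 + (L + α^2/β + |δ|)/(2*β)) * (1+T) * E 0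
      = (1+T)*E 0 + ((L + α^2/β + |δ|)/(2*β)) * ((1+T) * E 0) := by ring
  rw [hexp]
  have hTE : T * E 0 ≤ (1+T) * E 0 := by nlinarith
  linarith
end
end
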